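/- arXiv:math/9804153 — 6 statements merged into one kernel-verified Lean document; each statement's English description precedes it below -/
import Mathlib

section
/- 𝔰𝔱 ≤ 𝔰𝔱'. -/
open Cardinal Set

/-- `X` is a `𝔰𝔱_l`-family on (the canonical type of order type) `l`:
a collection of countably infinite subsets of `l` such that every subset of
cardinality `ℵ₁` contains a member of `X`. -/
def IsStickFam (l : Cardinal) (X : Set (Set l.ord.ToType)) : Prop :=
  (∀ x ∈ X, #x = ℵ₀) ∧
    ∀ y : Set l.ord.ToType, #y = aleph 1 → ∃ x ∈ X, x ⊆ y

/-- The cardinal `𝔰𝔱_l`. -/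
noncomputable def stickL (l : Cardinal) : Cardinal :=
  sInf {c | ∃ X : Set (Set l.ord.ToType), IsStickFam l X ∧ #X = c}

/-- The cardinal `𝔰𝔱` (`= 𝔰𝔱_{ℵ₁}`). -/
noncomputable def stick : Cardinal := stickL (aleph 1)

/-- The cardinal `𝔰𝔱'`: the least `κ ≥ ℵ₁` carrying a stick family of size `κ`. -/
noncomputable def stick' : Cardinal :=
  sInf {k | aleph 1 ≤ k ∧ ∃ X : Set (Set k.ord.ToType), IsStickFam k X ∧ #X = k}

/-
A stick family on `κ ≥ ℵ₁` pulls back along an embedding `ℵ₁ ↪ κ` to a stick family on `ℵ₁` of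
no larger size, so `𝔰𝔱` is a lower bound of the set whose infimum is `𝔰𝔱'`. That set is nonempty
(which matters, as `sInf ∅ = 0`): `κ = 2 ^ ℵ₁` satisfies `κ ^ ℵ₀ = κ`, so the countably infinite
subsets of `κ` form a stick family of size exactly `κ`.
-/

universe u

open scoped symmDiff

theorem mk_symmDiff_singleton_eq_aleph0 {α : Type*} {s : Set α} (hs : #s = ℵ₀) (a : α) :
    #(s ∆ {a} : Set α) = ℵ₀ := by
  apply le_antisymm
  · have hs : s.Countable := le_aleph0_iff_set_countable.mp hs.le
    exact le_aleph0_iff_set_countable.mpr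
      ((hs.union (countable_singleton a)).mono symmDiff_subset_union)
  · have hs : s.Infinite := infinite_coe_iff.mp (aleph0_le_mk_iff.mp hs.ge)
    exact aleph0_le_mk_iff.mpr
      (infinite_coe_iff.mpr ((hs.sdiff (finite_singleton a)).mono le_sup_left))

section CountableSubsets

variable (α : Type*) [Infinite α]

theorem mk_setOf_mk_eq_aleph0_le_power : #{s : Set α | #s = ℵ₀} ≤ #α ^ ℵ₀ :=
  (mk_le_mk_of_subset fun _ hs => le_of_eq hs).trans (mk_bounded_set_le_of_infinite α ℵ₀)

theorem mk_le_mk_setOf_mk_eq_aleph0 : #α ≤ #{s : Set α | #s = ℵ₀} := by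
  obtain ⟨s₀, hs₀⟩ := le_mk_iff_exists_set.mp (aleph0_le_mk α)
  exact mk_le_of_injective (f := fun a => ⟨s₀ ∆ {a}, mk_symmDiff_singleton_eq_aleph0 hs₀ a⟩)
    fun a b h => singleton_injective (symmDiff_right_injective s₀ (congrArg Subtype.val h))

end CountableSubsets

theorem isStickFam_setOf_mk_eq_aleph0 (l : Cardinal) :
    IsStickFam l {s | #s = ℵ₀} := by
  refine ⟨fun _ hx => hx, fun y hy => ?_⟩
  obtain ⟨x, hxy, hx⟩ := le_mk_iff_exists_subset.mp (hy ▸ aleph0_le_aleph 1 : ℵ₀ ≤ #y)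
  exact ⟨x, hx, hxy⟩

theorem exists_isStickFam_mk_eq {κ : Cardinal} (hκ : ℵ₀ ≤ κ) (hpow : κ ^ ℵ₀ = κ) :
    ∃ X : Set (Set κ.ord.ToType), IsStickFam κ X ∧ #X = κ := by
  have : Infinite κ.ord.ToType := aleph0_le_mk_iff.mp (by rwa [mk_ord_toType])
  refine ⟨_, isStickFam_setOf_mk_eq_aleph0 κ, le_antisymm ?_ ?_⟩
  · simpa only [mk_ord_toType, hpow] using mk_setOf_mk_eq_aleph0_le_power κ.ord.ToType
  · simpa only [mk_ord_toType] using mk_le_mk_setOf_mk_eq_aleph0 κ.ord.ToType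

theorem stick'_set_nonempty :
    {k | aleph 1 ≤ k ∧ ∃ X : Set (Set k.ord.ToType), IsStickFam k X ∧ #X = k}.Nonempty := by
  have hκ : aleph 1 ≤ 2 ^ aleph 1 := (cantor _).le
  refine ⟨2 ^ aleph 1, hκ, exists_isStickFam_mk_eq ((aleph0_le_aleph 1).trans hκ) ?_⟩
  rw [← power_mul, mul_aleph0_eq (aleph0_le_aleph 1)]

theorem IsStickFam.preimage {l k : Cardinal.{u}} (f : l.ord.ToType ↪ k.ord.ToType)
    {X : Set (Set k.ord.ToType)} (hX : IsStickFam k X) :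
    IsStickFam l ((f ⁻¹' ·) '' {x ∈ X | x ⊆ range f}) := by
  constructor
  · rintro _ ⟨x, ⟨hxX, hxf⟩, rfl⟩
    rw [mk_preimage_of_injective_of_subset_range f x f.injective hxf]
    exact hX.1 x hxX
  · intro y hy
    obtain ⟨x, hxX, hxy⟩ := hX.2 (f '' y) (by rw [mk_image_eq f.injective, hy])
    refine ⟨f ⁻¹' x, ⟨x, ⟨hxX, hxy.trans (image_subset_range f y)⟩, rfl⟩, ?_⟩
    exact (preimage_mono hxy).trans (preimage_image_eq y f.injective).le

theorem stickL_le_mk_of_isStickFam {l k : Cardinal.{u}} (hlk : l ≤ k)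
    {X : Set (Set k.ord.ToType)} (hX : IsStickFam k X) : stickL l ≤ #X := by
  obtain ⟨f⟩ : Nonempty (l.ord.ToType ↪ k.ord.ToType) := by
    rwa [← le_def, mk_ord_toType, mk_ord_toType]
  calc stickL l ≤ #((f ⁻¹' ·) '' {x ∈ X | x ⊆ range f}) := csInf_le' ⟨_, hX.preimage f, rfl⟩
    _ ≤ #{x ∈ X | x ⊆ range f} := mk_image_le
    _ ≤ #X := mk_le_mk_of_subset fun _ hx => hx.1

theorem stick_le_stick' : stick ≤ stick' := by
  refine le_csInf stick'_set_nonempty ?_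
  rintro k ⟨hk, X, hX, hcard⟩
  exact hcard ▸ stickL_le_mk_of_isStickFam hk hX
end

section
/- If 𝔰𝔱 < ℵ_{ω₁} then 𝔰𝔱 = 𝔰𝔱'; in particular, under this hypothesis 𝔰𝔱'' ≤ 𝔰𝔱. -/
open Cardinal Set

/-- The cardinal `𝔰𝔱''`: the least `κ ≥ ℵ₁` carrying a family of size `κ` of countably
infinite subsets of `κ` such that every subset of `κ` of cardinality `κ` contains a member. -/
noncomputable def stick'' : Cardinal :=
  sInf {k | aleph 1 ≤ k ∧ ∃ X : Set (Set k.ord.ToType),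
    (∀ x ∈ X, #x = ℵ₀) ∧ (∀ y : Set k.ord.ToType, #y = k → ∃ x ∈ X, x ⊆ y) ∧ #X = k}

/-!
By induction on `κ < ℵ_{ω₁}`, every set of size `κ` carries a stick family of size at most
`max κ 𝔰𝔱`. For `κ ≤ ℵ₁` pull back a minimal family on `ω₁`. For `κ = ℵ_β` with `1 < β < ω₁`,
the cofinality of `ω_β` is `ℵ₀` (limit `β`) or at least `ℵ₂` (successor `β`), never `ℵ₁`; so
every `ℵ₁`-subset of `ω_β` meets some initial segment `Iic b`, of size `< κ`, in `ℵ₁` points, and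
the union of the `κ` families of the initial segments is a stick family on `ω_β`.
For `κ = 𝔰𝔱` this gives, after padding, a stick family of size `𝔰𝔱` on `𝔰𝔱`, so `𝔰𝔱' ≤ 𝔰𝔱`;
conversely every stick family on some `κ ≥ ℵ₁` restricts to one on `ω₁`, so `𝔰𝔱 ≤ 𝔰𝔱'`. A stick
family on `𝔰𝔱` also meets every subset of size `𝔰𝔱`, whence `𝔰𝔱'' ≤ 𝔰𝔱`.
-/

universe u v

open Ordinal

/- `IsStickFam l X` unfolds to `IsStickFamily l.ord.ToType X`; the two are used
interchangeably. -/
def IsStickFamily (α : Type*) (X : Set (Set α)) : Prop :=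
  (∀ x ∈ X, #x = ℵ₀) ∧ ∀ y : Set α, #y = ℵ₁ → ∃ x ∈ X, x ⊆ y

theorem isStickFamily_setOf_mk_eq_aleph0 (α : Type u) : IsStickFamily α {x | #x = ℵ₀} := by
  refine ⟨fun x hx => hx, fun y hy => ?_⟩
  obtain ⟨x, hxy, hx⟩ := le_mk_iff_exists_subset.1 (hy ▸ aleph0_le_aleph 1)
  exact ⟨x, hx, hxy⟩

namespace IsStickFamily

variable {α : Type u} {X : Set (Set α)}

theorem exists_subset_of_aleph_one_le (hX : IsStickFamily α X) {y : Set α} (hy : ℵ₁ ≤ #y) :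
    ∃ x ∈ X, x ⊆ y := by
  obtain ⟨z, hzy, hz⟩ := le_mk_iff_exists_subset.1 hy
  obtain ⟨x, hxX, hxz⟩ := hX.2 z hz
  exact ⟨x, hxX, hxz.trans hzy⟩

theorem union (hX : IsStickFamily α X) {Z : Set (Set α)} (hZ : ∀ z ∈ Z, #z = ℵ₀) :
    IsStickFamily α (X ∪ Z) :=
  ⟨fun x hx => hx.elim (hX.1 x) (hZ x), fun y hy =>
    let ⟨x, hxX, hxy⟩ := hX.2 y hy; ⟨x, .inl hxX, hxy⟩⟩

theorem exists_mk_eq {Z : Set (Set α)} (hX : IsStickFamily α X)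
    (hZ : ∀ z ∈ Z, #z = ℵ₀) {κ : Cardinal.{u}} (hκ : ℵ₀ ≤ κ) (hXκ : #X ≤ κ) (hZκ : #Z = κ) :
    ∃ X' : Set (Set α), IsStickFamily α X' ∧ #X' = κ := by
  refine ⟨X ∪ Z, hX.union hZ, le_antisymm ?_ (hZκ ▸ mk_le_mk_of_subset subset_union_right)⟩
  calc #(X ∪ Z : Set (Set α)) ≤ #X + #Z := mk_union_le _ _
    _ ≤ κ + κ := add_le_add hXκ hZκ.le
    _ = κ := add_eq_self hκ

/- Every member is a nonempty subset of the countable set `⋃₀ X`, while `α` has an `ℵ₁`-sized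
subset avoiding it. -/
theorem aleph_one_le_mk (hX : IsStickFamily α X) (hα : ℵ₁ ≤ #α) : ℵ₁ ≤ #X := by
  by_contra! hXc
  have hU : #(⋃₀ X) < #α := by
    refine lt_of_le_of_lt ?_ (lt_of_lt_of_le aleph0_lt_aleph_one hα)
    refine le_aleph0_iff_set_countable.2 (Countable.sUnion ?_ fun x hx => ?_)
    · exact le_aleph0_iff_set_countable.1 (lt_aleph_one_iff.1 hXc)
    · exact le_aleph0_iff_set_countable.1 (hX.1 x hx).le
  have : Infinite α := infinite_iff.2 ((aleph0_le_aleph 1).trans hα)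
  obtain ⟨x, hxX, hxU⟩ := hX.exists_subset_of_aleph_one_le
    ((mk_compl_of_infinite _ hU).symm ▸ hα)
  obtain ⟨a, ha⟩ : x.Nonempty := mk_set_ne_zero_iff.1 (by simp [hX.1 x hxX, aleph0_ne_zero])
  exact hxU ha (mem_sUnion_of_mem ha hxX)

theorem comap {β : Type v} {Y : Set (Set β)} (hY : IsStickFamily β Y) (f : α ↪ β) :
    ∃ X : Set (Set α), IsStickFamily α X ∧ lift.{v} #X ≤ lift.{u} #Y := by
  refine ⟨preimage f '' {y ∈ Y | y ⊆ range f}, ⟨?_, fun x hx => ?_⟩, ?_⟩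
  · rintro - ⟨y, ⟨hyY, hyf⟩, rfl⟩
    have := mk_preimage_of_injective_of_subset_range_lift f y f.injective hyf
    rwa [hY.1 y hyY, lift_aleph0, lift_eq_aleph0] at this
  · have hfx : #(f '' x) = ℵ₁ := by
      rw [← lift_eq_aleph_one.{v, u}, mk_image_eq_lift f x f.injective, hx, lift_aleph,
        Ordinal.lift_one]
    obtain ⟨y, hyY, hyx⟩ := hY.2 _ hfx
    refine ⟨f ⁻¹' y, ⟨y, ⟨hyY, hyx.trans (image_subset_range f x)⟩, rfl⟩, ?_⟩
    exact (preimage_mono hyx).trans (preimage_image_eq x f.injective).le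
  · exact mk_image_le_lift.trans (lift_le.2 (mk_le_mk_of_subset (sep_subset _ _)))

theorem iUnion {ι : Type*} {t : ι → Set α} {X : ∀ i, Set (Set (t i))}
    (hX : ∀ i, IsStickFamily (t i) (X i))
    (hcov : ∀ y : Set α, #y = ℵ₁ → ∃ i, #↥(y ∩ t i) = ℵ₁) :
    IsStickFamily α (⋃ i, image (↑) '' X i) := by
  refine ⟨?_, fun y hy => ?_⟩
  · simp only [mem_iUnion, mem_image]
    rintro - ⟨i, x, hx, rfl⟩
    rw [mk_image_eq Subtype.val_injective, (hX i).1 x hx]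
  · obtain ⟨i, hi⟩ := hcov y hy
    have : #((↑) ⁻¹' y : Set (t i)) = ℵ₁ := by
      rw [← mk_image_eq Subtype.val_injective, Subtype.image_preimage_coe, inter_comm, hi]
    obtain ⟨x, hxX, hxy⟩ := (hX i).2 _ this
    refine ⟨(↑) '' x, mem_iUnion.2 ⟨i, mem_image_of_mem _ hxX⟩, ?_⟩
    exact (image_mono hxy).trans (image_preimage_subset _ _)

end IsStickFamily

/- Otherwise `y` is cofinal, so `cof α ≤ ℵ₁`, hence `cof α ≤ ℵ₀`, and `y` is a countable union of
the countable sets `y ∩ Iic c`. -/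
theorem exists_mk_inter_Iic_eq_aleph_one {α : Type u} [LinearOrder α] (hα : Order.cof α ≠ ℵ₁)
    {y : Set α} (hy : #y = ℵ₁) : ∃ b, #↥(y ∩ Iic b) = ℵ₁ := by
  by_contra! hsmall
  have hcof : IsCofinal y := by
    intro b
    by_contra! hb
    refine hsmall b ?_
    rw [inter_eq_left.2 fun c hc => mem_Iic.2 (hb c hc).le, hy]
  obtain ⟨C, hC, hCc⟩ := Order.exists_cof_eq α
  have : Countable C := by
    refine mk_le_aleph0_iff.1 (lt_aleph_one_iff.1 ?_)
    rw [hCc]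
    exact lt_of_le_of_ne (hy ▸ Order.cof_le hcof) hα
  have hcount : ∀ c : C, (y ∩ Iic (c : α)).Countable := fun c =>
    le_aleph0_iff_set_countable.1 (lt_aleph_one_iff.1 (lt_of_le_of_ne
      (hy ▸ mk_le_mk_of_subset inter_subset_left) (hsmall c)))
  have hy_sub : y ⊆ ⋃ c : C, y ∩ Iic (c : α) := fun a ha =>
    let ⟨c, hc, hac⟩ := hC a
    mem_iUnion.2 ⟨⟨c, hc⟩, ha, hac⟩
  have := le_aleph0_iff_set_countable.2 ((countable_iUnion hcount).mono hy_sub)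
  exact absurd (hy ▸ this) (not_le.2 aleph0_lt_aleph_one)

theorem exists_isStickFamily_of_forall_Iic {α : Type u} [LinearOrder α]
    (hα : Order.cof α ≠ ℵ₁) {κ : Cardinal.{u}}
    (h : ∀ b : α, ∃ X : Set (Set (Iic b)), IsStickFamily (Iic b) X ∧ #X ≤ κ) :
    ∃ X : Set (Set α), IsStickFamily α X ∧ #X ≤ #α * κ := by
  choose X hX hXκ using h
  refine ⟨_, IsStickFamily.iUnion hX fun y hy => exists_mk_inter_Iic_eq_aleph_one hα hy, ?_⟩
  exact (mk_iUnion_le _).trans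
    (mul_le_mul_right (ciSup_le' fun b => mk_image_le.trans (hXκ b)) _)

theorem cof_omega_ne_aleph_one {o : Ordinal} (h1 : 1 < o) (hω : o < ω₁) : (ω_ o).cof ≠ ℵ₁ := by
  rcases zero_or_succ_or_isSuccLimit o with rfl | ⟨p, rfl⟩ | ho
  · exact absurd h1 (not_lt.2 zero_le_one)
  · rw [Order.succ_eq_add_one, cof_omega_add_one]
    exact (aleph_lt_aleph.2 h1).ne'
  · rw [cof_omega ho, cof_eq_aleph0_of_isSuccLimit ho hω]
    exact aleph0_lt_aleph_one.ne

theorem mk_Iic_toType_omega_lt {o : Ordinal} (b : (ω_ o).ToType) : #(Iic b) < ℵ_ o := by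
  have hIio : #(Iio b) < ℵ_ o := by simpa using mk_Iio_lt b (by simp)
  rw [← Iio_insert]
  exact (mk_insert_le).trans_lt (add_lt_of_lt (aleph0_le_aleph o) hIio
    (one_lt_aleph0.trans_le (aleph0_le_aleph o)))

theorem IsStickFamily.exists_mk_le_max_of_mk_lt_aleph_omega_one {W : Type u} {X₀ : Set (Set W)}
    (h₀ : IsStickFamily W X₀) (hW : ℵ₁ ≤ #W) (α : Type u) (hα : #α < ℵ_ ω₁) :
    ∃ X : Set (Set α), IsStickFamily α X ∧ #X ≤ max #α #X₀ := by
  induction hc : #α using WellFoundedLT.induction generalizing α with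
  | ind c IH =>
  subst hc
  rcases le_or_gt #α ℵ₁ with hα₁ | hα₁
  · obtain ⟨f⟩ := (le_def _ _).1 (hα₁.trans hW)
    obtain ⟨X, hX, hXc⟩ := h₀.comap f
    exact ⟨X, hX, (lift_le.1 hXc).trans (le_max_right _ _)⟩
  obtain ⟨o, ho⟩ := mem_range_aleph_iff.2 (aleph0_lt_aleph_one.trans hα₁).le
  have h1o : 1 < o := aleph_lt_aleph.1 (ho ▸ hα₁)
  have hoω : o < ω₁ := aleph_lt_aleph.1 (ho ▸ hα)
  have hpiece : ∀ b : (ω_ o).ToType, ∃ X : Set (Set (Iic b)),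
      IsStickFamily (Iic b) X ∧ #X ≤ max #α #X₀ := fun b => by
    have hb : #(Iic b) < #α := ho ▸ mk_Iic_toType_omega_lt b
    obtain ⟨X, hX, hXc⟩ := IH _ hb (Iic b) (hb.trans hα) rfl
    exact ⟨X, hX, hXc.trans (max_le_max_right _ hb.le)⟩
  obtain ⟨Y, hY, hYc⟩ := exists_isStickFamily_of_forall_Iic
    (by rw [cof_toType]; exact cof_omega_ne_aleph_one h1o hoω) hpiece
  have hL : #(ω_ o).ToType = #α := by simp [ho]
  obtain ⟨f⟩ := (le_def _ _).1 hL.ge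
  obtain ⟨X, hX, hXc⟩ := hY.comap f
  refine ⟨X, hX, (lift_le.1 hXc).trans (hYc.trans ?_)⟩
  rw [hL]
  exact (mul_le_max_of_aleph0_le_left (ho ▸ aleph0_le_aleph o)).trans (by simp)

theorem exists_isStickFam_mk_eq_stick :
    ∃ X : Set (Set (ℵ₁ : Cardinal.{u}).ord.ToType), IsStickFam ℵ₁ X ∧ #X = stick :=
  csInf_mem (s := {c | ∃ X : Set (Set (ℵ₁ : Cardinal.{u}).ord.ToType), IsStickFam ℵ₁ X ∧ #X = c})
    ⟨_, _, isStickFamily_setOf_mk_eq_aleph0 _, rfl⟩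

theorem stick_le_mk {X : Set (Set (ℵ₁ : Cardinal.{u}).ord.ToType)} (hX : IsStickFam ℵ₁ X) :
    stick ≤ #X :=
  csInf_le' ⟨X, hX, rfl⟩

theorem lift_stick_le_lift_mk {β : Type v} {X : Set (Set β)} (hX : IsStickFamily β X)
    (hβ : ℵ₁ ≤ #β) : lift.{v} stick.{u} ≤ lift.{u} #X := by
  obtain ⟨f⟩ := lift_mk_le'.1
    (show lift.{v} #(ℵ₁ : Cardinal.{u}).ord.ToType ≤ lift.{u} #β by simpa using hβ)
  obtain ⟨Y, hY, hYc⟩ := hX.comap f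
  exact (lift_le.2 (stick_le_mk hY)).trans hYc

/- The three occurrences of `stick` in `stick_eq_stick'_of_lt_aleph_omega1` live in independent
universes, so its hypothesis has to be moved between universes. -/
theorem lift_stick : lift.{v} stick.{u} = lift.{u} stick.{v} := by
  obtain ⟨X, hX, hXc⟩ := exists_isStickFam_mk_eq_stick.{u}
  obtain ⟨Y, hY, hYc⟩ := exists_isStickFam_mk_eq_stick.{v}
  exact le_antisymm (hYc ▸ lift_stick_le_lift_mk hY (by simp))
    (hXc ▸ lift_stick_le_lift_mk hX (by simp))

theorem stick_lt_aleph_omega_one_univ (h : stick.{u} < ℵ_ ω₁) : stick.{v} < ℵ_ ω₁ := by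
  have h' : lift.{v} stick.{u} < lift.{v} (ℵ_ ω₁ : Cardinal.{u}) := Cardinal.lift_lt.2 h
  rw [lift_stick] at h'
  exact Cardinal.lift_lt.1 (by simpa using h')

theorem aleph_one_le_stick : ℵ₁ ≤ stick := by
  obtain ⟨X, hX, hXc⟩ := exists_isStickFam_mk_eq_stick
  exact hXc ▸ IsStickFamily.aleph_one_le_mk hX (by simp)

theorem exists_isStickFam_stick_mk_eq_stick (h : stick.{u} < ℵ_ ω₁) :
    ∃ X : Set (Set stick.{u}.ord.ToType), IsStickFam stick X ∧ #X = stick := by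
  obtain ⟨X₀, hX₀, hX₀c⟩ := exists_isStickFam_mk_eq_stick
  have hT : #stick.ord.ToType = stick := mk_ord_toType _
  obtain ⟨X, hX, hXc⟩ :=
    IsStickFamily.exists_mk_le_max_of_mk_lt_aleph_omega_one hX₀ (by simp) _ (hT ▸ h)
  rw [hT, hX₀c, max_self] at hXc
  obtain ⟨g⟩ := (le_def _ _).1
    (show #(ℵ₁ : Cardinal).ord.ToType ≤ #stick.ord.ToType by simpa using aleph_one_le_stick)
  refine hX.exists_mk_eq (Z := image g '' X₀) ?_ ((aleph0_le_aleph 1).trans aleph_one_le_stick)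
    hXc (by rw [mk_image_eq (image_injective.2 g.injective), hX₀c])
  rintro - ⟨x, hx, rfl⟩
  rw [mk_image_eq g.injective, hX₀.1 x hx]

theorem stick_eq_stick' (h : stick.{u} < ℵ_ ω₁) : stick.{u} = stick' := by
  obtain ⟨X, hX, hXc⟩ := exists_isStickFam_stick_mk_eq_stick h
  have hmem : stick ∈ {k | ℵ₁ ≤ k ∧ ∃ X : Set (Set k.ord.ToType), IsStickFam k X ∧ #X = k} :=
    ⟨aleph_one_le_stick, X, hX, hXc⟩
  refine le_antisymm (le_csInf ⟨_, hmem⟩ ?_) (csInf_le' hmem)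
  rintro k ⟨hk, Y, hY, hYk⟩
  simpa [hYk] using lift_stick_le_lift_mk.{u, u} hY (by simpa using hk)

theorem stick''_le_stick (h : stick.{u} < ℵ_ ω₁) : stick''.{u} ≤ stick := by
  obtain ⟨X, hX, hXc⟩ := exists_isStickFam_stick_mk_eq_stick h
  refine csInf_le' ⟨aleph_one_le_stick, X, hX.1, fun y hy => ?_, hXc⟩
  exact IsStickFamily.exists_subset_of_aleph_one_le hX (by rw [hy]; exact aleph_one_le_stick)

theorem stick_eq_stick'_of_lt_aleph_omega1 (h : stick < aleph (aleph 1).ord) :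
    stick = stick' ∧ stick'' ≤ stick := by
  rw [ord_aleph] at h
  exact ⟨stick_eq_stick' (stick_lt_aleph_omega_one_univ h),
    stick''_le_stick (stick_lt_aleph_omega_one_univ h)⟩
end

section
/- For any stationary E ⊆ Lim(ω₁), the conjunction of ♣(E) and CH (2^{ℵ0} = ℵ₁) is equivalent to ◊(E). -/
open Cardinal Set

/-- The first uncountable ordinal. -/
noncomputable def ω₁ : Ordinal := (aleph 1).ord

/-- The set of limit ordinals below `ω₁`. -/
def LimOmega1 : Set Ordinal := {γ | γ < ω₁ ∧ Order.IsSuccLimit γ}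

/-- `C` is a club (closed unbounded) subset of `ω₁`. -/
def IsClubIn (C : Set Ordinal) : Prop :=
  C ⊆ Iio ω₁ ∧
    (∀ δ, δ < ω₁ → δ ≠ 0 → (∀ α < δ, ∃ β ∈ C, α < β ∧ β < δ) → δ ∈ C) ∧
    (∀ α < ω₁, ∃ β ∈ C, α < β)

/-- `S` is a stationary subset of `ω₁`: it meets every club subset of `ω₁`. -/
def IsStatIn (S : Set Ordinal) : Prop :=
  S ⊆ Iio ω₁ ∧ ∀ C, IsClubIn C → (S ∩ C).Nonempty

/-- The set of ordinals `s` has order type `ω`. -/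
def HasOtpOmega (s : Set Ordinal) : Prop :=
  Ordinal.type (Subrel ((· < ·) : Ordinal → Ordinal → Prop) (· ∈ s)) = Ordinal.omega0

/-- `x γ` is a cofinal subset of `γ` of order type `ω`. -/
def IsLadderAt (γ : Ordinal) (s : Set Ordinal) : Prop :=
  s ⊆ Iio γ ∧ (∀ α < γ, ∃ β ∈ s, α ≤ β) ∧ HasOtpOmega s

/-- `(x γ)_{γ ∈ E}` is a `♣(E)`-sequence. -/
def ClubSeq (E : Set Ordinal) (x : Ordinal → Set Ordinal) : Prop :=
  (∀ γ ∈ E, IsLadderAt γ (x γ)) ∧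
    ∀ y : Set Ordinal, y ⊆ Iio ω₁ → #y = aleph 1 → ∃ γ ∈ E, x γ ⊆ y

/-- The principle `♣(E)`. -/
def ClubPrinciple (E : Set Ordinal) : Prop := ∃ x, ClubSeq E x

/-- The principle `◊(E)`. -/
def DiamondPrinciple (E : Set Ordinal) : Prop :=
  ∃ A : Ordinal → Set Ordinal, (∀ γ ∈ E, A γ ⊆ Iio γ) ∧
    ∀ B : Set Ordinal, B ⊆ Iio ω₁ → IsStatIn {γ ∈ E | B ∩ Iio γ = A γ}

/-!
`◊(E)` gives CH because every subset of `ω` is guessed as some `A γ` with `γ < ω₁`. It gives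
`♣(E)` by choosing at each `γ ∈ E` a ladder inside `A γ` whenever `A γ` is unbounded below `γ`:
an uncountable `y` is guessed at some limit point `γ` of `y`, where `A γ = y ∩ γ` is unbounded.

Conversely, CH enumerates the bounded subsets of `ω₁` as `(W ν)_{ν < ω₁}`, each occurring
unboundedly often, and we set `A γ = γ ∩ ⋃_{ν ∈ x γ} W ν` for a `♣(E)`-sequence `x`. Given `B`
and a club `C`, pick `H c > c` with `W (H c) = B ∩ c` and let `D ⊆ C` be the club of points of
`C` closed under `H`. Some `x γ` lies inside `H[D]`; since `H` is increasing on `D`, `γ` is a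
limit of `D`, hence in `C`, and `A γ = B ∩ γ`.
-/

universe u v w

theorem ω₁_eq_omega_one : ω₁ = Ordinal.omega 1 := Cardinal.ord_aleph 1

theorem isSuccLimit_ω₁ : Order.IsSuccLimit ω₁ := isSuccLimit_ord (aleph0_le_aleph 1)

theorem omega0_lt_ω₁ : Ordinal.omega0 < ω₁ := ω₁_eq_omega_one ▸ Ordinal.omega0_lt_omega_one

theorem mk_Iio_ω₁ : #(Iio ω₁) = aleph 1 := by
  rw [mk_Iio_ordinal, ω₁, card_ord, lift_aleph, Ordinal.lift_one]

theorem countable_Iio_of_lt_ω₁ {c : Ordinal} (hc : c < ω₁) : (Iio c).Countable := by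
  rw [← le_aleph0_iff_set_countable, mk_Iio_ordinal, lift_le_aleph0, ← lt_aleph_one_iff, ← lt_ord]
  exact hc

theorem exists_lt_ω₁_of_countable {s : Set Ordinal} (hs : s.Countable) (hω : s ⊆ Iio ω₁) :
    ∃ δ < ω₁, s ⊆ Iio δ := by
  have : Countable s := hs.to_subtype
  have hsup : ⨆ β : s, β.1 < ω₁ := by
    rw [ω₁_eq_omega_one] at hω ⊢
    exact Ordinal.iSup_lt_omega_one fun β => hω β.2
  refine ⟨Order.succ (⨆ β : s, β.1), isSuccLimit_ω₁.succ_lt hsup, fun β hβ => ?_⟩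
  exact Order.lt_succ_of_le (Ordinal.le_iSup (fun β : s => β.1) ⟨β, hβ⟩)

theorem mk_eq_aleph_one_iff_unbounded {s : Set Ordinal} (hs : s ⊆ Iio ω₁) :
    #s = aleph 1 ↔ ∀ α < ω₁, ∃ β ∈ s, α < β := by
  have hle : #s ≤ aleph 1 := (mk_le_mk_of_subset hs).trans_eq mk_Iio_ω₁
  constructor
  · intro h α hα
    by_contra! hbd
    have hcount : s.Countable := (countable_Iio_of_lt_ω₁ (isSuccLimit_ω₁.succ_lt hα)).mono
      fun β hβ => Order.lt_succ_of_le (hbd β hβ)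
    rw [← le_aleph0_iff_set_countable, h] at hcount
    exact aleph0_lt_aleph_one.not_ge hcount
  · intro h
    refine hle.antisymm (not_lt.mp fun hlt => ?_)
    obtain ⟨δ, hδ, hsδ⟩ :=
      exists_lt_ω₁_of_countable (le_aleph0_iff_set_countable.mp (lt_aleph_one_iff.mp hlt)) hs
    obtain ⟨β, hβ, hδβ⟩ := h δ hδ
    exact (hsδ hβ).not_gt hδβ

theorem exists_strictMono_chain {α : Type*} [Preorder α] {p : α → Prop} {Q : ℕ → α → α → Prop}
    (step : ∀ n a, p a → ∃ b, p b ∧ a < b ∧ Q n a b) {a₀ : α} (h₀ : p a₀) :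
    ∃ b : ℕ → α, b 0 = a₀ ∧ StrictMono b ∧ (∀ n, p (b n)) ∧ ∀ n, Q n (b n) (b (n + 1)) := by
  choose F hFp hFlt hFQ using step
  let b : ℕ → {a // p a} := fun n => Nat.rec ⟨a₀, h₀⟩ (fun n a => ⟨F n a a.2, hFp _ _ _⟩) n
  exact ⟨fun n => (b n).1, rfl, strictMono_nat_of_lt_succ fun n => hFlt _ _ _,
    fun n => (b n).2, fun n => hFQ _ _ _⟩

theorem exists_lt_ω₁_of_step {Q : Ordinal → Ordinal → Prop}
    (step : ∀ α < ω₁, ∃ β < ω₁, α < β ∧ Q α β) {α : Ordinal} (hα : α < ω₁) :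
    ∃ δ < ω₁, α < δ ∧ ∀ ζ < δ, ∃ β, ζ < β ∧ ∃ β' < δ, Q β β' := by
  obtain ⟨b, hb0, hmono, hbω, hQ⟩ :=
    exists_strictMono_chain (p := (· < ω₁)) (Q := fun _ => Q) (fun _ a ha => step a ha) hα
  have hlt : ∀ n, b n < ⨆ n, b n := fun n =>
    (hmono n.lt_succ_self).trans_le (Ordinal.le_iSup b (n + 1))
  refine ⟨⨆ n, b n, ?_, hb0 ▸ hlt 0, fun ζ hζ => ?_⟩
  · rw [ω₁_eq_omega_one] at hbω ⊢
    exact Ordinal.iSup_lt_omega_one hbω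
  · obtain ⟨n, hn⟩ := Ordinal.lt_iSup_iff.mp hζ
    exact ⟨b n, hn, b (n + 1), hlt _, hQ n⟩

def IsUnboundedBelow (γ : Ordinal) (s : Set Ordinal) : Prop :=
  ∀ α < γ, ∃ β ∈ s, α < β ∧ β < γ

theorem IsUnboundedBelow.mono {γ : Ordinal} {s t : Set Ordinal} (h : IsUnboundedBelow γ s)
    (hst : s ⊆ t) : IsUnboundedBelow γ t := fun α hα =>
  let ⟨β, hβ, hαβ, hβγ⟩ := h α hα
  ⟨β, hst hβ, hαβ, hβγ⟩

theorem isUnboundedBelow_Iio {γ : Ordinal} (hγ : Order.IsSuccLimit γ) :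
    IsUnboundedBelow γ (Iio γ) := fun α hα =>
  ⟨Order.succ α, hγ.succ_lt hα, Order.lt_succ α, hγ.succ_lt hα⟩

theorem IsLadderAt.isUnboundedBelow {γ : Ordinal} {s : Set Ordinal} (h : IsLadderAt γ s)
    (hγ : Order.IsSuccLimit γ) : IsUnboundedBelow γ s := fun α hα =>
  let ⟨β, hβ, hαβ⟩ := h.2.1 (Order.succ α) (hγ.succ_lt hα)
  ⟨β, hβ, Order.succ_le_iff.mp hαβ, h.1 hβ⟩

theorem hasOtpOmega_range {a : ℕ → Ordinal} (ha : StrictMono a) : HasOtpOmega (range a) := by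
  let e : ((· < ·) : ℕ → ℕ → Prop) ≃r Subrel (· < ·) (· ∈ range a) :=
    ⟨Equiv.ofInjective a ha.injective, ha.lt_iff_lt⟩
  have := Ordinal.lift_type_eq.{0, _, 0}.2 ⟨e⟩
  rwa [Ordinal.type_nat_lt, Ordinal.lift_omega0, Ordinal.lift_uzero, eq_comm] at this

theorem exists_isLadderAt_subset {γ : Ordinal} (hγ : γ < ω₁) (hlim : Order.IsSuccLimit γ)
    {s : Set Ordinal} (hs : IsUnboundedBelow γ s) : ∃ t ⊆ s, IsLadderAt γ t := by
  obtain ⟨g, hg⟩ := (countable_Iio_of_lt_ω₁ hγ).exists_eq_range ⟨0, hlim.pos⟩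
  have hgγ : ∀ n, g n < γ := fun n => show g n ∈ Iio γ from hg ▸ mem_range_self n
  -- The `n`-th step also passes `g n`, so that the chain exhausts the enumeration `g` of `γ`.
  obtain ⟨b, -, hmono, hbγ, hbs⟩ := exists_strictMono_chain (p := (· < γ))
    (Q := fun n _ β => β ∈ s ∧ g n < β)
    (fun n a ha => let ⟨β, hβ, hβ₁, hβ₂⟩ := hs (max a (g n)) (max_lt ha (hgγ n))
      ⟨β, hβ₂, (le_max_left _ _).trans_lt hβ₁, hβ, (le_max_right _ _).trans_lt hβ₁⟩) hlim.pos
  refine ⟨range (b ∘ Nat.succ), range_subset_iff.mpr fun n => (hbs n).1,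
    range_subset_iff.mpr fun n => hbγ _, fun α hα => ?_,
    hasOtpOmega_range (hmono.comp fun _ _ => Nat.succ_lt_succ)⟩
  obtain ⟨n, rfl⟩ : α ∈ range g := hg ▸ hα
  exact ⟨b (n + 1), mem_range_self n, (hbs n).2.le⟩

theorem isClubIn_Ioo {α : Ordinal} (hα : α < ω₁) : IsClubIn (Ioo α ω₁) := by
  refine ⟨fun β hβ => hβ.2, fun δ hδ hδ0 h => ?_, fun β hβ => ?_⟩
  · obtain ⟨β, hβ, -, hβδ⟩ := h 0 (pos_iff_ne_zero.mpr hδ0)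
    exact ⟨hβ.1.trans hβδ, hδ⟩
  · refine ⟨Order.succ (max α β), ⟨?_, isSuccLimit_ω₁.succ_lt (max_lt hα hβ)⟩, ?_⟩
    · exact (le_max_left α β).trans_lt (Order.lt_succ _)
    · exact (le_max_right α β).trans_lt (Order.lt_succ _)

def closurePoints (f : Ordinal → Ordinal) : Set Ordinal :=
  {δ | δ < ω₁ ∧ ∀ α < δ, f α < δ}

theorem isClubIn_closurePoints {f : Ordinal → Ordinal} (hf : ∀ α < ω₁, f α < ω₁) :
    IsClubIn (closurePoints f) := by
  refine ⟨fun δ hδ => hδ.1, fun δ hδ _ h => ⟨hδ, fun α hα => ?_⟩, fun α hα => ?_⟩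
  · obtain ⟨β, hβ, hαβ, hβδ⟩ := h α hα
    exact (hβ.2 α hαβ).trans hβδ
  · have step : ∀ β < ω₁, ∃ β' < ω₁, β < β' ∧ ∀ ζ < β, f ζ < β' := fun β hβ => by
      obtain ⟨δ, hδ, hfδ⟩ := exists_lt_ω₁_of_countable ((countable_Iio_of_lt_ω₁ hβ).image f)
        (image_subset_iff.mpr fun ζ hζ => hf ζ (hζ.trans hβ))
      refine ⟨Order.succ (max β δ), isSuccLimit_ω₁.succ_lt (max_lt hβ hδ),
        Order.lt_succ_of_le (le_max_left β δ), fun ζ hζ => ?_⟩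
      exact ((hfδ (mem_image_of_mem f hζ)).trans_le (le_max_right β δ)).trans (Order.lt_succ _)
    obtain ⟨δ, hδ, hαδ, hclosed⟩ := exists_lt_ω₁_of_step step hα
    refine ⟨δ, ⟨hδ, fun ζ hζ => ?_⟩, hαδ⟩
    obtain ⟨β, hζβ, β', hβ'δ, hβ'⟩ := hclosed ζ hζ
    exact (hβ' ζ hζβ).trans hβ'δ

theorem IsClubIn.inter {C D : Set Ordinal} (hC : IsClubIn C) (hD : IsClubIn D) :
    IsClubIn (C ∩ D) := by
  refine ⟨fun δ hδ => hC.1 hδ.1, fun δ hδ hδ0 h => ⟨hC.2.1 δ hδ hδ0 ?_, hD.2.1 δ hδ hδ0 ?_⟩, ?_⟩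
  · exact IsUnboundedBelow.mono h inter_subset_left
  · exact IsUnboundedBelow.mono h inter_subset_right
  intro α hα
  have step : ∀ β < ω₁, ∃ β' < ω₁, β < β' ∧
      (∃ c ∈ C, β < c ∧ c < β') ∧ ∃ d ∈ D, β < d ∧ d < β' := fun β hβ => by
    obtain ⟨c, hc, hβc⟩ := hC.2.2 β hβ
    obtain ⟨d, hd, hβd⟩ := hD.2.2 β hβ
    refine ⟨Order.succ (max c d), isSuccLimit_ω₁.succ_lt (max_lt (hC.1 hc) (hD.1 hd)),
      hβc.trans (Order.lt_succ_of_le (le_max_left c d)), ⟨c, hc, hβc, ?_⟩, ⟨d, hd, hβd, ?_⟩⟩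
    · exact Order.lt_succ_of_le (le_max_left c d)
    · exact Order.lt_succ_of_le (le_max_right c d)
  obtain ⟨δ, hδ, hαδ, hclosed⟩ := exists_lt_ω₁_of_step step hα
  have hδ0 : δ ≠ 0 := (pos_of_gt hαδ).ne'
  refine ⟨δ, ⟨hC.2.1 δ hδ hδ0 fun ζ hζ => ?_, hD.2.1 δ hδ hδ0 fun ζ hζ => ?_⟩, hαδ⟩
  · obtain ⟨β, hζβ, β', hβ'δ, ⟨c, hc, hβc, hcβ'⟩, -⟩ := hclosed ζ hζ
    exact ⟨c, hc, hζβ.trans hβc, hcβ'.trans hβ'δ⟩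
  · obtain ⟨β, hζβ, β', hβ'δ, -, ⟨d, hd, hβd, hdβ'⟩⟩ := hclosed ζ hζ
    exact ⟨d, hd, hζβ.trans hβd, hdβ'.trans hβ'δ⟩

theorem two_power_aleph0_eq_aleph_one_of_diamondPrinciple {E : Set Ordinal.{u}}
    (hD : DiamondPrinciple E) : (2 : Cardinal.{u + 1}) ^ ℵ₀ = aleph 1 := by
  obtain ⟨A, -, hA⟩ := hD
  have hguess : ∀ B ⊆ Iio Ordinal.omega0, ∃ γ < ω₁, A γ = B := fun B hB => by
    obtain ⟨γ, ⟨-, hγ⟩, hωγ, hγω₁⟩ :=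
      (hA B (hB.trans (Iio_subset_Iio omega0_lt_ω₁.le))).2 _ (isClubIn_Ioo omega0_lt_ω₁)
    exact ⟨γ, hγω₁, hγ ▸ inter_eq_left.mpr (hB.trans (Iio_subset_Iio hωγ.le))⟩
  have hsurj : Function.Surjective
      fun γ : Iio ω₁ => ((↑) : Iio Ordinal.omega0 → Ordinal) ⁻¹' A γ := fun S => by
    obtain ⟨γ, hγ, hAγ⟩ := hguess (((↑) : Iio Ordinal.omega0 → Ordinal) '' S)
      (image_subset_iff.mpr fun β _ => β.property)
    exact ⟨⟨γ, hγ⟩, by simp only [hAγ, preimage_image_eq S Subtype.val_injective]⟩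
  have hle := mk_le_of_surjective hsurj
  rw [mk_set, mk_Iio_ordinal, Ordinal.card_omega0, lift_aleph0, mk_Iio_ω₁] at hle
  exact hle.antisymm (two_power_aleph0 ▸ aleph_one_le_continuum)

theorem clubPrinciple_of_diamondPrinciple {E : Set Ordinal} (hE : E ⊆ LimOmega1)
    (hD : DiamondPrinciple E) : ClubPrinciple E := by
  obtain ⟨A, -, hA⟩ := hD
  have hladder : ∀ γ ∈ E, ∃ t, IsLadderAt γ t ∧ (IsUnboundedBelow γ (A γ) → t ⊆ A γ) :=
    fun γ hγ => by
      obtain ⟨hγω₁, hlim⟩ := hE hγ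
      by_cases hAγ : IsUnboundedBelow γ (A γ)
      · obtain ⟨t, hts, ht⟩ := exists_isLadderAt_subset hγω₁ hlim hAγ
        exact ⟨t, ht, fun _ => hts⟩
      · obtain ⟨t, -, ht⟩ := exists_isLadderAt_subset hγω₁ hlim (isUnboundedBelow_Iio hlim)
        exact ⟨t, ht, fun h => absurd h hAγ⟩
  choose! x hx hxA using hladder
  refine ⟨x, hx, fun y hy hmk => ?_⟩
  choose! f hfy hf using (mk_eq_aleph_one_iff_unbounded hy).mp hmk
  obtain ⟨γ, ⟨hγE, hγ⟩, hγω₁, hfγ⟩ :=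
    (hA y hy).2 _ (isClubIn_closurePoints fun α hα => hy (hfy α hα))
  have hAγ : IsUnboundedBelow γ (A γ) := fun α hα =>
    ⟨f α, hγ ▸ ⟨hfy α (hα.trans hγω₁), hfγ α hα⟩, hf α (hα.trans hγω₁), hfγ α hα⟩
  exact ⟨γ, hγE, (hxA γ hγE hAγ).trans (hγ ▸ inter_subset_left)⟩

theorem exists_forall_mk_le_mk_preimage {I T : Type u} [Infinite I] [Nonempty T] (h : #T ≤ #I) :
    ∃ f : I → T, ∀ t, #I ≤ #(f ⁻¹' {t}) := by
  obtain ⟨g⟩ := h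
  obtain ⟨e⟩ := Cardinal.eq.mp (mul_eq_self (aleph0_le_mk I)).symm
  refine ⟨fun i => Function.invFun g (e i).1, fun t => ?_⟩
  refine mk_le_of_injective (f := fun j => ⟨e.symm (g t, j), ?_⟩) fun j j' hj => ?_
  · simp [Function.leftInverse_invFun g.injective t]
  · simpa using hj

theorem mk_countable_subsets_Iio_ω₁_le (hCH : (2 : Cardinal.{u + 1}) ^ ℵ₀ = aleph 1) :
    #{s : Set Ordinal.{u} // s ⊆ Iio ω₁ ∧ #s ≤ ℵ₀} ≤ aleph 1 :=
  calc #{s : Set Ordinal.{u} // s ⊆ Iio ω₁ ∧ #s ≤ ℵ₀}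
      ≤ max #(Iio (ω₁ : Ordinal.{u})) ℵ₀ ^ ℵ₀ := mk_bounded_subset_le _ _
    _ = aleph 1 := by
      rw [mk_Iio_ω₁, max_eq_left (aleph0_le_aleph 1), ← hCH, ← power_mul, aleph0_mul_aleph0]

theorem exists_enumeration_of_CH (hCH : (2 : Cardinal.{u + 1}) ^ ℵ₀ = aleph 1) :
    ∃ W : Ordinal.{u} → Set Ordinal.{u}, ∀ s c, c < ω₁ → s ⊆ Iio c →
      ∀ α < ω₁, ∃ ν < ω₁, α < ν ∧ W ν = s := by
  have : Infinite (Iio (ω₁ : Ordinal.{u})) :=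
    infinite_iff.mpr (mk_Iio_ω₁ ▸ aleph0_le_aleph 1)
  have : Nonempty {s : Set Ordinal.{u} // s ⊆ Iio ω₁ ∧ #s ≤ ℵ₀} :=
    ⟨⟨∅, empty_subset _, by simp⟩⟩
  obtain ⟨f, hf⟩ := exists_forall_mk_le_mk_preimage
    (mk_countable_subsets_Iio_ω₁_le hCH |>.trans_eq mk_Iio_ω₁.symm)
  refine ⟨fun ν => if hν : ν ∈ Iio ω₁ then (f ⟨ν, hν⟩).1 else ∅, fun s c hc hsc α hα => ?_⟩
  have hsω₁ : s ⊆ Iio ω₁ := hsc.trans (Iio_subset_Iio hc.le)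
  have hs : #s ≤ ℵ₀ := le_aleph0_iff_set_countable.mpr ((countable_Iio_of_lt_ω₁ hc).mono hsc)
  have hfiber : #((↑) '' (f ⁻¹' {⟨s, hsω₁, hs⟩}) : Set Ordinal.{u}) = aleph 1 :=
    (mk_image_eq Subtype.val_injective).trans ((hf _).antisymm' (mk_set_le _) ▸ mk_Iio_ω₁)
  obtain ⟨_, ⟨ν, hν, rfl⟩, hαν⟩ :=
    (mk_eq_aleph_one_iff_unbounded (image_subset_iff.mpr fun ν _ => ν.2)).mp hfiber α hα
  refine ⟨ν, ν.2, hαν, ?_⟩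
  simp only [dif_pos ν.2, Subtype.coe_eta, mem_singleton_iff.mp hν]

/-- The hypotheses make `H` strictly increasing on `D`, interleaving with it:
`d < c → d < H d < c < H c`. -/
theorem IsUnboundedBelow.inter_preimage {H : Ordinal.{u} → Ordinal.{u}} {D x : Set Ordinal.{u}}
    {γ : Ordinal.{u}} (hx : IsUnboundedBelow γ x) (hxD : x ⊆ H '' D) (hlt : ∀ c ∈ D, c < H c)
    (hclosed : ∀ c ∈ D, ∀ d ∈ D, d < c → H d < c) : IsUnboundedBelow γ (D ∩ H ⁻¹' x) := by
  intro α hα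
  obtain ⟨ν, hνx, hαν, hνγ⟩ := hx α hα
  obtain ⟨ν', hν'x, hνν', hν'γ⟩ := hx ν hνγ
  obtain ⟨c, hc, rfl⟩ := hxD hνx
  obtain ⟨c', hc', rfl⟩ := hxD hν'x
  have hcc' : c < c' := by
    rcases lt_or_ge c c' with h | h
    · exact h
    · rcases h.lt_or_eq with h | rfl
      · exact absurd ((hclosed c hc c' hc' h).trans (hlt c hc)) hνν'.not_gt
      · exact absurd hνν' (lt_irrefl _)
  exact ⟨c', ⟨hc', hν'x⟩, hαν.trans (hclosed c' hc' c hc hcc'), (hlt c' hc').trans hν'γ⟩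

theorem diamondPrinciple_of_clubSeq_of_enumeration {E : Set Ordinal.{u}} (hE : E ⊆ LimOmega1)
    {x : Ordinal.{u} → Set Ordinal.{u}} (hx : ClubSeq E x) {W : Ordinal.{u} → Set Ordinal.{u}}
    (hW : ∀ s c, c < ω₁ → s ⊆ Iio c → ∀ α < ω₁, ∃ ν < ω₁, α < ν ∧ W ν = s) :
    DiamondPrinciple E := by
  refine ⟨fun γ => Iio γ ∩ ⋃ ν ∈ x γ, W ν, fun _ _ => inter_subset_left,
    fun B _ => ⟨fun γ hγ => (hE hγ.1).1, fun C hC => ?_⟩⟩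
  choose! H hHω₁ hlt hHW using fun c (hc : c < ω₁) => hW (B ∩ Iio c) c hc inter_subset_right c hc
  set D := C ∩ closurePoints H
  have hD : IsClubIn D := hC.inter (isClubIn_closurePoints hHω₁)
  have hHD : #(H '' D) = aleph 1 := by
    refine (mk_eq_aleph_one_iff_unbounded ?_).mpr fun α hα => ?_
    · exact image_subset_iff.mpr fun c hc => hHω₁ c (hD.1 hc)
    · obtain ⟨c, hc, hαc⟩ := hD.2.2 α hα
      exact ⟨H c, mem_image_of_mem H hc, hαc.trans (hlt c (hD.1 hc))⟩
  obtain ⟨γ, hγE, hxγ⟩ := hx.2 _ (image_subset_iff.mpr fun c hc => hHω₁ c (hD.1 hc)) hHD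
  obtain ⟨hγω₁, hlim⟩ := hE hγE
  have hunb : IsUnboundedBelow γ (D ∩ H ⁻¹' x γ) :=
    ((hx.1 γ hγE).isUnboundedBelow hlim).inter_preimage hxγ (fun c hc => hlt c (hD.1 hc))
      fun c hc d _ hdc => hc.2.2 d hdc
  refine ⟨γ, ⟨hγE, ?_⟩, hC.2.1 γ hγω₁ hlim.ne_bot (hunb.mono fun c hc => hc.1.1)⟩
  ext β
  simp only [mem_inter_iff, mem_Iio, mem_iUnion, exists_prop]
  constructor
  · rintro ⟨hβB, hβγ⟩
    obtain ⟨c, ⟨hcD, hcx⟩, hβc, -⟩ := hunb β hβγ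
    exact ⟨hβγ, H c, hcx, hHW c (hD.1 hcD) ▸ ⟨hβB, hβc⟩⟩
  · rintro ⟨hβγ, ν, hνx, hβν⟩
    obtain ⟨c, hcD, rfl⟩ := hxγ hνx
    exact ⟨(hHW c (hD.1 hcD) ▸ hβν).1, hβγ⟩

theorem two_power_aleph0_eq_aleph_one_univ_iff :
    (2 : Cardinal.{v}) ^ ℵ₀ = aleph 1 ↔ (2 : Cardinal.{w}) ^ ℵ₀ = aleph 1 := by
  rw [two_power_aleph0, two_power_aleph0, ← lift_inj.{v, w}, lift_continuum, lift_aleph,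
    Ordinal.lift_one, ← lift_inj.{w, v}, lift_continuum, lift_aleph, Ordinal.lift_one]

theorem club_and_CH_iff_diamond_general (E : Set Ordinal)
    (hE' : E ⊆ LimOmega1) :
    (ClubPrinciple E ∧ (2 : Cardinal) ^ ℵ₀ = aleph 1) ↔ DiamondPrinciple E := by
  refine ⟨fun ⟨⟨x, hx⟩, hCH⟩ => ?_, fun hD => ⟨clubPrinciple_of_diamondPrinciple hE' hD, ?_⟩⟩
  · obtain ⟨W, hW⟩ := exists_enumeration_of_CH (two_power_aleph0_eq_aleph_one_univ_iff.mp hCH)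
    exact diamondPrinciple_of_clubSeq_of_enumeration hE' hx hW
  · exact two_power_aleph0_eq_aleph_one_univ_iff.mp
      (two_power_aleph0_eq_aleph_one_of_diamondPrinciple hD)

theorem club_and_CH_iff_diamond (E : Set Ordinal) (hE : IsStatIn E)
    (hE' : E ⊆ LimOmega1) :
    (ClubPrinciple E ∧ (2 : Cardinal) ^ ℵ₀ = aleph 1) ↔ DiamondPrinciple E :=
  club_and_CH_iff_diamond_general E hE'
end

section
/- MA(Cohen), i.e., MA(Fn(κ,2)) for every cardinal κ, implies 𝔰𝔱'' = 2^{ℵ0}. -/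
open Cardinal Set

/-- `Fn A`: finite partial functions from `A` to `2` (represented as `Bool`). -/
def Fn (A : Type*) : Type _ :=
  {p : A → Option Bool // {a | p a ≠ none}.Finite}

/-- `Fn A` ordered by reverse inclusion: `q ≤ p` iff `q` extends `p`. -/
instance Fn.instPartialOrder (A : Type*) : PartialOrder (Fn A) where
  le q p := ∀ a, p.1 a ≠ none → q.1 a = p.1 a
  le_refl p := fun _ _ => rfl
  le_trans r q p hrq hqp := fun a ha => by
    have h1 := hqp a ha
    have h2 := hrq a (h1 ▸ ha)
    rw [h2, h1]
  le_antisymm p q h h' := Subtype.ext <| funext fun a => by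
    by_cases hq : q.1 a = none
    · by_cases hp : p.1 a = none
      · rw [hp, hq]
      · exact (h' a hp).symm
    · exact h a hq

/-- The empty condition is the greatest element of `Fn A`. -/
instance Fn.instOrderTop (A : Type*) : OrderTop (Fn A) where
  top := ⟨fun _ => none, by simp⟩
  le_top p := fun a ha => absurd rfl ha

/-- Martin's axiom for the partial order `P`: any family of fewer than `2^ℵ₀` dense
subsets of `P` admits a generic filter (an upward closed, downward directed subset
meeting all members of the family). -/
def MAP (P : Type*) [PartialOrder P] : Prop :=
  ∀ 𝒟 : Set (Set P), (∀ D ∈ 𝒟, ∀ p : P, ∃ q ∈ D, q ≤ p) → #𝒟 < 2 ^ ℵ₀ →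
    ∃ G : Set P, (∀ p ∈ G, ∀ q, p ≤ q → q ∈ G) ∧
      (∀ p ∈ G, ∀ q ∈ G, ∃ r ∈ G, r ≤ p ∧ r ≤ q) ∧
      ∀ D ∈ 𝒟, (G ∩ D).Nonempty

/-! If `ℵ₁ ≤ κ < 𝔠` and `X` is a family of `κ` infinite subsets of `κ`, Martin's axiom for
`Fn(κ, 2)` applied to fewer than `𝔠` dense sets gives a generic `g : κ → 2` that vanishes
somewhere on every member of `X` and takes the value `1` on each of the `κ` disjoint columns of
`κ ≃ κ × ℕ`. Then `g⁻¹(1)` has size `κ` but contains no member of `X`, so no `κ < 𝔠` witnesses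
`𝔰𝔱''`. The continuum does: the countably infinite subsets of `𝔠` are `𝔠 ^ ℵ₀ = 𝔠` many. -/

namespace Fn

variable {A B : Type*}

theorem apply_eq_of_le {p q : Fn A} (hqp : q ≤ p) {a : A} {b : Bool} (hp : p.1 a = some b) :
    q.1 a = some b :=
  (hqp a (by simp [hp])).trans hp

open Classical in
noncomputable def update (p : Fn A) (a : A) (b : Bool) : Fn A :=
  ⟨fun a' => if a' = a then some b else p.1 a', (p.2.insert a).subset fun a' ha' => by
    by_cases h : a' = a
    · exact Or.inl h
    · exact Or.inr (by simpa [h] using ha')⟩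

theorem update_apply_self (p : Fn A) (a : A) (b : Bool) : (p.update a b).1 a = some b := by
  simp [update]

theorem update_le {p : Fn A} {a : A} (hp : p.1 a = none) (b : Bool) : p.update a b ≤ p :=
  fun a' ha' => by
    have : a' ≠ a := by rintro rfl; exact ha' hp
    simp [update, this]

def takesValueOn (s : Set A) (b : Bool) : Set (Fn A) :=
  {p | ∃ a ∈ s, p.1 a = some b}

theorem exists_mem_takesValueOn_le (p : Fn A) {s : Set A} (hs : s.Infinite) (b : Bool) :
    ∃ q ∈ takesValueOn s b, q ≤ p := by
  obtain ⟨a, has, hpa⟩ := (hs.sdiff p.2).nonempty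
  exact ⟨p.update a b, ⟨a, has, update_apply_self p a b⟩, update_le (not_not.1 hpa) b⟩

def congr (e : A ≃ B) : Fn A ≃o Fn B where
  toFun p := ⟨p.1 ∘ e.symm, p.2.preimage e.symm.injective.injOn⟩
  invFun q := ⟨q.1 ∘ e, q.2.preimage e.injective.injOn⟩
  left_inv p := Subtype.ext <| funext fun a => by simp
  right_inv q := Subtype.ext <| funext fun b => by simp
  map_rel_iff' {p q} := by
    change (∀ b, q.1 (e.symm b) ≠ none → p.1 (e.symm b) = q.1 (e.symm b)) ↔
      ∀ a, q.1 a ≠ none → p.1 a = q.1 a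
    exact e.surjective.forall.trans (by simp)

end Fn

theorem MAP.of_orderIso {P Q : Type*} [PartialOrder P] [PartialOrder Q] (e : P ≃o Q)
    (hP : MAP P) : MAP Q := by
  intro 𝒟 hdense hcard
  have hdense' : ∀ D ∈ (e ⁻¹' ·) '' 𝒟, ∀ p : P, ∃ q ∈ D, q ≤ p := by
    rintro _ ⟨D, hD, rfl⟩ p
    obtain ⟨q, hqD, hqp⟩ := hdense D hD (e p)
    exact ⟨e.symm q, by simpa using hqD, e.symm_apply_le.2 hqp⟩
  have hcard' : #((e ⁻¹' ·) '' 𝒟) < 2 ^ ℵ₀ := by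
    rw [two_power_aleph0] at hcard ⊢
    exact lift_lt_continuum.1 (mk_image_le_lift.trans_lt (lift_lt_continuum.2 hcard))
  obtain ⟨G, hup, hdir, hgen⟩ := hP _ hdense' hcard'
  refine ⟨e '' G, ?_, ?_, ?_⟩
  · rintro _ ⟨p, hp, rfl⟩ q hpq
    exact ⟨e.symm q, hup p hp _ (e.le_symm_apply.2 hpq), e.apply_symm_apply q⟩
  · rintro _ ⟨p, hp, rfl⟩ _ ⟨q, hq, rfl⟩
    obtain ⟨r, hr, hrp, hrq⟩ := hdir p hp q hq
    exact ⟨e r, mem_image_of_mem e hr, e.le_iff_le.2 hrp, e.le_iff_le.2 hrq⟩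
  · intro D hD
    obtain ⟨p, hpG, hpD⟩ := hgen _ ⟨D, hD, rfl⟩
    exact ⟨e p, mem_image_of_mem e hpG, hpD⟩

/-- A cardinal below `𝔠` is the lift of a cardinal in `Type`, so it can be moved to any universe. -/
theorem MAP_Fn_of_mk_lt_continuum (h : ∀ κ : Cardinal.{u}, MAP (Fn κ.ord.ToType))
    {T : Type v} (hT : #T < 2 ^ ℵ₀) : MAP (Fn T) := by
  rw [two_power_aleph0, ← lift_continuum.{v, 0}] at hT
  obtain ⟨c, -, hc⟩ := lt_lift_iff.1 hT
  have e : Nonempty ((lift.{u} c).ord.ToType ≃ T) := by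
    rw [← lift_mk_eq', mk_ord_toType, ← hc, lift_lift, lift_lift]
  exact (h _).of_orderIso (Fn.congr e.some)

theorem exists_embedding_prod_nat (T : Type*) [Infinite T] : Nonempty (T × ℕ ↪ T) := by
  rw [← le_def]
  simp [mk_prod, mul_aleph0_eq (aleph0_le_mk T)]

theorem exists_mk_eq_forall_not_subset_of_MAP {T : Type*} [Infinite T] (hMA : MAP (Fn T))
    (hT : #T < 2 ^ ℵ₀) (X : Set (Set T)) (hX : ∀ x ∈ X, x.Infinite) (hXc : #X < 2 ^ ℵ₀) :
    ∃ y : Set T, #y = #T ∧ ∀ x ∈ X, ¬ x ⊆ y := by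
  obtain ⟨f⟩ := exists_embedding_prod_nat T
  have hcol : ∀ t, Function.Injective fun n => f (t, n) :=
    fun t => f.injective.comp (Prod.mk_right_injective t)
  set 𝒟 : Set (Set (Fn T)) := (Fn.takesValueOn · false) '' X ∪
    range fun t => Fn.takesValueOn (range fun n => f (t, n)) true
  have hdense : ∀ D ∈ 𝒟, ∀ p, ∃ q ∈ D, q ≤ p := by
    rintro _ (⟨x, hx, rfl⟩ | ⟨t, rfl⟩) p
    · exact Fn.exists_mem_takesValueOn_le p (hX x hx) false
    · exact Fn.exists_mem_takesValueOn_le p (infinite_range_of_injective (hcol t)) true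
  have hcard : #𝒟 < 2 ^ ℵ₀ := (mk_union_le _ _).trans_lt <|
    add_lt_of_lt (two_power_aleph0 ▸ aleph0_le_continuum) (mk_image_le.trans_lt hXc)
      (mk_range_le.trans_lt hT)
  obtain ⟨G, -, hdir, hgen⟩ := hMA 𝒟 hdense hcard
  set y : Set T := {a | ∃ p ∈ G, p.1 a = some true}
  refine ⟨y, le_antisymm (mk_set_le y) ?_, ?_⟩
  · have hmeet : ∀ t, ∃ n, f (t, n) ∈ y := fun t => by
      obtain ⟨p, hpG, _, ⟨n, rfl⟩, hp⟩ := hgen _ (Or.inr ⟨t, rfl⟩)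
      exact ⟨n, p, hpG, hp⟩
    choose n hn using hmeet
    exact mk_le_of_injective (f := fun t => (⟨f (t, n t), hn t⟩ : y))
      fun t t' htt' => (Prod.ext_iff.1 (f.injective (congrArg Subtype.val htt'))).1
  · rintro x hx hxy
    obtain ⟨p, hpG, a, hax, hpa⟩ := hgen _ (Or.inl ⟨x, hx, rfl⟩)
    obtain ⟨q, hqG, hqa⟩ := hxy hax
    obtain ⟨r, -, hrp, hrq⟩ := hdir p hpG q hqG
    simpa using (Fn.apply_eq_of_le hrp hpa).symm.trans (Fn.apply_eq_of_le hrq hqa)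

theorem mk_le_mk_setOf_mk_eq_aleph0_s8 (T : Type*) [Infinite T] :
    #T ≤ #{x : Set T | #x = ℵ₀} := by
  obtain ⟨f⟩ := exists_embedding_prod_nat T
  have hcol : ∀ t, #(range fun n => f (t, n)) = ℵ₀ := fun t => by
    simpa [Function.comp_def] using
      mk_range_eq_of_injective (f.injective.comp (Prod.mk_right_injective t))
  refine mk_le_of_injective (f := fun t => ⟨range fun n => f (t, n), hcol t⟩) fun t t' htt' => ?_
  have hrange : (range fun n => f (t, n)) = range fun n => f (t', n) := Subtype.mk.inj htt'
  obtain ⟨n, hn⟩ : f (t, 0) ∈ range fun n => f (t', n) := hrange ▸ ⟨0, rfl⟩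
  exact (Prod.ext_iff.1 (f.injective hn)).1.symm

theorem mk_setOf_mk_eq_aleph0_le (T : Type*) [Infinite T] :
    #{x : Set T | #x = ℵ₀} ≤ #T ^ ℵ₀ := by
  have hle : ∀ x : Set T, #x = ℵ₀ → #x ≤ ℵ₀ := fun _ => le_of_eq
  exact (mk_le_of_injective (Subtype.impEmbedding _ _ hle).injective).trans
    (mk_bounded_set_le_of_infinite T ℵ₀)

theorem exists_family_of_mk_eq_continuum {T : Type*} (hT : #T = 2 ^ ℵ₀) :
    ∃ X : Set (Set T), (∀ x ∈ X, #x = ℵ₀) ∧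
      (∀ y : Set T, #y = 2 ^ ℵ₀ → ∃ x ∈ X, x ⊆ y) ∧ #X = 2 ^ ℵ₀ := by
  have hℵ₀ : ℵ₀ ≤ (2 ^ ℵ₀ : Cardinal) := (cantor ℵ₀).le
  have : Infinite T := infinite_iff.2 (hT ▸ hℵ₀)
  refine ⟨{x | #x = ℵ₀}, fun x hx => hx, fun y hy => ?_, ?_⟩
  · obtain ⟨x, hxy, hx⟩ := le_mk_iff_exists_subset.1 (hy ▸ hℵ₀)
    exact ⟨x, hx, hxy⟩
  · refine le_antisymm ((mk_setOf_mk_eq_aleph0_le T).trans_eq ?_)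
      (hT ▸ mk_le_mk_setOf_mk_eq_aleph0_s8 T)
    rw [hT, ← power_mul, aleph0_mul_aleph0]

theorem stick''_eq_continuum_of_MA_Cohen
    (h : ∀ κ : Cardinal, MAP (Fn κ.ord.ToType)) :
    stick'' = 2 ^ ℵ₀ := by
  refine IsLeast.csInf_eq ⟨⟨?_, exists_family_of_mk_eq_continuum (mk_ord_toType _)⟩, ?_⟩
  · exact aleph_one_le_continuum.trans_eq two_power_aleph0.symm
  rintro k ⟨hk, X, hXcount, hXstick, hXcard⟩
  by_contra! hlt
  have hkT : #k.ord.ToType = k := mk_ord_toType k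
  have hTlt : #k.ord.ToType < 2 ^ ℵ₀ := hkT.trans_lt hlt
  have : Infinite k.ord.ToType := infinite_iff.2 ((aleph0_le_aleph 1).trans (hk.trans_eq hkT.symm))
  obtain ⟨y, hy, hyX⟩ := exists_mk_eq_forall_not_subset_of_MAP
    (MAP_Fn_of_mk_lt_continuum h hTlt) hTlt X
    (fun x hx => infinite_coe_iff.1 (infinite_iff.2 (hXcount x hx).ge)) (hXcard.trans_lt hlt)
  obtain ⟨x, hx, hxy⟩ := hXstick y (hy.trans hkT)
  exact hyX x hx hxy
end

section
/- Let κ be a regular infinite cardinal and (P_i)_{i∈X} a family of partial orders with greatest elements such that |P_i| ≤ 2^{<κ} for all i ∈ X. Then the pseudo-product Π*_{κ,i∈X}P_i has the (2^{<κ})⁺-cc, i.e., every antichain in Π*_{κ,i∈X}P_i has cardinality at most 2^{<κ}. -/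
open Cardinal Set

universe u

variable {X : Type u} (κ : Cardinal.{u}) (P : X → Type u)
  [∀ i, PartialOrder (P i)] [∀ i, OrderTop (P i)]

/-- The underlying set of the pseudo-product `Π*_{κ,i∈X} P i`: functions whose
support (the set of coordinates where the value is not the greatest element)
has cardinality `< κ`. -/
def PseudoProd : Type u :=
  {p : ∀ i, P i // #{i | p i ≠ ⊤} < κ}

variable {κ P}

/-- The pseudo-product ordering: `p ≤ q` iff `p` is pointwise `≤ q` and
`p(i) < q(i) < 1` holds for only finitely many `i`. -/
def PseudoProd.ple (p q : PseudoProd κ P) : Prop :=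
  (∀ i, p.1 i ≤ q.1 i) ∧ {i | p.1 i < q.1 i ∧ q.1 i < ⊤}.Finite

/-- The horizontal relation: `p ≤_h q` iff `supp p ⊇ supp q` and `p` agrees with
`q` on `supp q`. -/
def PseudoProd.pleH (p q : PseudoProd κ P) : Prop :=
  {i | q.1 i ≠ ⊤} ⊆ {i | p.1 i ≠ ⊤} ∧ ∀ i, q.1 i ≠ ⊤ → p.1 i = q.1 i

/-- The vertical relation: `p ≤_v q` iff `supp p = supp q`, `p ≤ q` pointwise and
`p(i) < q(i) < 1` holds for only finitely many `i`. -/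
def PseudoProd.pleV (p q : PseudoProd κ P) : Prop :=
  {i | p.1 i ≠ ⊤} = {i | q.1 i ≠ ⊤} ∧ (∀ i, p.1 i ≤ q.1 i) ∧
    {i | p.1 i < q.1 i ∧ q.1 i < ⊤}.Finite

/-- `p` and `q` are incompatible in the pseudo-product: no `r` lies below both. -/
def PseudoProd.Incompat (p q : PseudoProd κ P) : Prop :=
  ¬∃ r : PseudoProd κ P, r.ple p ∧ r.ple q


namespace PseudoProdCC

lemma aleph0_le_mu (hκ : ℵ₀ ≤ κ) : ℵ₀ ≤ 2 ^< κ := by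
  rw [aleph0_le]
  intro n
  exact le_of_lt ((Cardinal.cantor _).trans_le
    (le_powerlt 2 ((nat_lt_aleph0 n).trans_le hκ)))

lemma kappa_le_mu (hκ : ℵ₀ ≤ κ) : κ ≤ 2 ^< κ := by
  by_contra h
  push_neg at h
  exact absurd (le_powerlt 2 h) (not_le.2 (Cardinal.cantor _))

lemma power_le_mu (hκ : κ.IsRegular) {l : Cardinal.{u}} (hl : l < κ) :
    (2 ^< κ) ^ l ≤ 2 ^< κ := by
  rcases lt_or_ge l ℵ₀ with h | h
  · exact pow_le (aleph0_le_mu hκ.aleph0_le) h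
  · by_cases hB : ∃ ν, ν < κ ∧ 2 ^< κ ≤ 2 ^ ν
    · obtain ⟨ν, hν, hle⟩ := hB
      have hm : max ν l < κ := max_lt hν hl
      have h2 : (2 : Cardinal) ^ ν ≤ 2 ^ max ν l :=
        power_le_power_left two_ne_zero (le_max_left _ _)
      have hinf : ℵ₀ ≤ max ν l := h.trans (le_max_right _ _)
      calc (2 ^< κ) ^ l ≤ ((2:Cardinal) ^ max ν l) ^ l :=
            power_le_power_right (hle.trans h2)
        _ = 2 ^ (max ν l * l) := by rw [← power_mul]
        _ = 2 ^ max ν l := by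
            rw [mul_eq_max hinf h, max_eq_left (le_max_right _ _)]
        _ ≤ 2 ^< κ := le_powerlt 2 hm
    · push_neg at hB
      set μ := 2 ^< κ with hμ
      set T := μ.ord.ToType with hT
      have hmkT : #T = μ := by rw [hT, mk_toType, card_ord]
      have hml : μ ^ l = #(l.out → T) := by
        calc μ ^ l = #T ^ #(l.out) := by rw [hmkT, mk_out]
          _ = #(l.out → T) := power_def _ _
      -- the filtration
      set e := (Ordinal.ToType.mk (o := μ.ord)) with he
      set cb : κ.ord.ToType → Cardinal.{u} :=
        fun b => ((((Ordinal.ToType.mk (o := κ.ord))).symm b : Iio κ.ord) : Ordinal).card with hcb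
      have hcbκ : ∀ b, cb b < κ := by
        intro b
        have h2 := ((((Ordinal.ToType.mk (o := κ.ord))).symm b) : Iio κ.ord).2
        rw [mem_Iio, Cardinal.lt_ord] at h2
        exact h2
      set F : κ.ord.ToType → Set (l.out → T) :=
        fun b => {f | ∀ x, ((e.symm (f x) : Iio μ.ord) : Ordinal) < (((2:Cardinal.{u}) ^ cb b).ord)} with hF
      have hcover : (⋃ b, F b) = Set.univ := by
        refine eq_univ_of_forall fun f => ?_
        have hex : ∀ x, ∃ ν, ν < κ ∧ ((e.symm (f x) : Iio μ.ord) : Ordinal).card < 2 ^ ν := by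
          intro x
          by_contra hcon
          push_neg at hcon
          have hle : μ ≤ ((e.symm (f x) : Iio μ.ord) : Ordinal).card :=
            powerlt_le.2 fun ν hν => hcon ν hν
          have hmm := (e.symm (f x) : Iio μ.ord).2
          rw [mem_Iio, Cardinal.lt_ord] at hmm
          exact absurd hle (not_le.2 hmm)
        choose ν hν1 hν2 using hex
        have hc : (⨆ x, ν x) < κ :=
          iSup_lt_of_isRegular hκ (by rw [mk_out]; exact hl) hν1
        have hcord : (⨆ x, ν x).ord < κ.ord := by rwa [Cardinal.ord_lt_ord]
        refine mem_iUnion.2 ⟨(Ordinal.ToType.mk (o := κ.ord)) ⟨(⨆ x, ν x).ord, hcord⟩, fun x => ?_⟩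
        have hcbeq : cb ((Ordinal.ToType.mk (o := κ.ord)) ⟨(⨆ x, ν x).ord, hcord⟩) = ⨆ x, ν x := by
          rw [hcb]
          simp only [OrderIso.symm_apply_apply]
          exact card_ord _
        rw [hcbeq, Cardinal.lt_ord]
        exact (hν2 x).trans_le
          (power_le_power_left two_ne_zero (le_ciSup (Cardinal.bddAbove_range _) x))
      have hFb : ∀ b, #(F b) ≤ μ := by
        intro b
        have hinj : Function.Injective
            (fun (f : F b) (x : l.out) =>
              (Ordinal.ToType.mk (o := ((2:Cardinal.{u}) ^ cb b).ord))
                ⟨((e.symm (f.1 x) : Iio μ.ord) : Ordinal), f.2 x⟩) := by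
          intro f g hfg
          apply Subtype.ext
          funext x
          have := congrFun hfg x
          simp only at this
          have h2 := ((Ordinal.ToType.mk (o := ((2:Cardinal.{u}) ^ cb b).ord))).injective this
          have h3 := congrArg Subtype.val h2
          exact e.symm.injective (Subtype.ext h3)
        calc #(F b) ≤ #(l.out → (((2:Cardinal.{u}) ^ cb b).ord.ToType)) := mk_le_of_injective hinj
          _ = #((((2:Cardinal.{u}) ^ cb b).ord.ToType)) ^ #(l.out) :=
              (power_def (((2:Cardinal.{u}) ^ cb b).ord.ToType) l.out).symm
          _ = ((2:Cardinal.{u}) ^ (cb b)) ^ l := by rw [mk_toType, card_ord, mk_out]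
          _ = (2:Cardinal.{u}) ^ (cb b * l) := by rw [← power_mul]
          _ ≤ μ := by
            refine le_powerlt 2 ?_
            calc cb b * l ≤ max (cb b) l ⊔ ℵ₀ := mul_le_max _ _
              _ = max (cb b) l := by
                  rw [max_eq_left (h.trans (le_max_right _ _))]
              _ < κ := max_lt (hcbκ b) hl
      calc μ ^ l = #(l.out → T) := hml
        _ = #(⋃ b, F b) := by rw [hcover, mk_univ]
        _ ≤ #(κ.ord.ToType) * ⨆ b, #(F b) := mk_iUnion_le _
        _ ≤ μ * μ := by
            refine mul_le_mul' ?_ (ciSup_le' hFb)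
            rw [mk_toType, card_ord]
            exact kappa_le_mu hκ.aleph0_le
        _ ≤ μ := by
            rw [mul_eq_max (aleph0_le_mu hκ.aleph0_le) (aleph0_le_mu hκ.aleph0_le)]
            exact max_le le_rfl le_rfl


lemma mu_mul_mu (hκ : κ.IsRegular) {a b : Cardinal.{u}}
    (ha : a ≤ 2 ^< κ) (hb : b ≤ 2 ^< κ) : a * b ≤ 2 ^< κ := by
  calc a * b ≤ (2 ^< κ) * (2 ^< κ) := mul_le_mul' ha hb
    _ = 2 ^< κ := by
        rw [mul_eq_max (aleph0_le_mu hκ.aleph0_le) (aleph0_le_mu hκ.aleph0_le)]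
        exact max_self _

lemma mk_small_subsets (hκ : κ.IsRegular) {E : Set X} (hE : #E ≤ 2 ^< κ) :
    #{t : Set X // t ⊆ E ∧ #t < κ} ≤ 2 ^< κ := by
  set cb : κ.ord.ToType → Cardinal.{u} :=
    fun b => (((Ordinal.ToType.mk (o := κ.ord)).symm b : Iio κ.ord) : Ordinal).card with hcb
  have hcbκ : ∀ b, cb b < κ := by
    intro b
    have h2 := (((Ordinal.ToType.mk (o := κ.ord)).symm b) : Iio κ.ord).2
    rw [mem_Iio, Cardinal.lt_ord] at h2
    exact h2
  set Φ : {t : Set X // t ⊆ E ∧ #t < κ} →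
      Σ b : κ.ord.ToType, {t : Set X // t ⊆ E ∧ #t ≤ cb b} :=
    fun t => ⟨(Ordinal.ToType.mk (o := κ.ord)) ⟨(#t.1).ord, by
        rw [mem_Iio, Cardinal.ord_lt_ord]; exact t.2.2⟩,
      ⟨t.1, t.2.1, by
        rw [hcb]
        simp only [OrderIso.symm_apply_apply]
        rw [card_ord]⟩⟩ with hΦ
  have hinj : Function.Injective Φ := by
    intro t t' h
    exact Subtype.ext (congrArg
      (fun (s : Σ b : κ.ord.ToType, {t : Set X // t ⊆ E ∧ #t ≤ cb b}) => s.2.1) h)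
  calc #{t : Set X // t ⊆ E ∧ #t < κ}
      ≤ #(Σ b : κ.ord.ToType, {t : Set X // t ⊆ E ∧ #t ≤ cb b}) := mk_le_of_injective hinj
    _ = sum (fun b => #{t : Set X // t ⊆ E ∧ #t ≤ cb b}) := mk_sigma _
    _ ≤ sum (fun _ : κ.ord.ToType => 2 ^< κ) := by
        refine sum_le_sum _ _ fun b => ?_
        calc #{t : Set X // t ⊆ E ∧ #t ≤ cb b} ≤ (#E ⊔ ℵ₀) ^ cb b :=
              mk_bounded_subset_le E (cb b)
          _ ≤ (2 ^< κ) ^ cb b :=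
              power_le_power_right (max_le hE (aleph0_le_mu hκ.aleph0_le))
          _ ≤ 2 ^< κ := power_le_mu hκ (hcbκ b)
    _ = #(κ.ord.ToType) * (2 ^< κ) := sum_const' _ _
    _ ≤ 2 ^< κ := by
        rw [mk_toType, card_ord]
        exact mu_mul_mu hκ (kappa_le_mu hκ.aleph0_le) le_rfl

lemma mk_supported (hκ : κ.IsRegular) (hP : ∀ i, #(P i) ≤ 2 ^< κ)
    {E : Set X} (hE : #E ≤ 2 ^< κ) :
    #{p : PseudoProd κ P // {i | p.1 i ≠ ⊤} ⊆ E} ≤ 2 ^< κ := by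
  classical
  set T := {t : Set X // t ⊆ E ∧ #t < κ} with hT
  set Φ : {p : PseudoProd κ P // {i | p.1 i ≠ ⊤} ⊆ E} → Σ t : T, ∀ i : t.1, P i :=
    fun p => ⟨⟨{i | p.1.1 i ≠ ⊤}, p.2, p.1.2⟩, fun i => p.1.1 i.1⟩ with hΦ
  set Ψ : (Σ t : T, ∀ i : t.1, P i) → ∀ i, P i :=
    fun s i => if h : i ∈ s.1.1 then s.2 ⟨i, h⟩ else ⊤ with hΨ
  have hleft : ∀ p, Ψ (Φ p) = p.1.1 := by
    intro p
    funext i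
    rw [hΨ, hΦ]
    by_cases h : p.1.1 i ≠ ⊤
    · simp only [dif_pos (show i ∈ {i | p.1.1 i ≠ ⊤} from h)]
    · push_neg at h
      simp only [h]
      rw [dif_neg]
      simpa using h
  have hinj : Function.Injective Φ := by
    intro p q h
    have := congrArg Ψ h
    rw [hleft, hleft] at this
    exact Subtype.ext (Subtype.ext this)
  calc #{p : PseudoProd κ P // {i | p.1 i ≠ ⊤} ⊆ E}
      ≤ #(Σ t : T, ∀ i : t.1, P i) := mk_le_of_injective hinj
    _ = sum (fun t : T => #(∀ i : t.1, P i)) := mk_sigma _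
    _ ≤ sum (fun _ : T => 2 ^< κ) := by
        refine sum_le_sum _ _ fun t => ?_
        calc #(∀ i : t.1, P i) = prod (fun i : t.1 => #(P i.1)) := mk_pi _
          _ ≤ prod (fun _ : t.1 => 2 ^< κ) := prod_le_prod _ _ fun i => hP i.1
          _ = (2 ^< κ) ^ #t.1 := prod_const' _ _
          _ ≤ 2 ^< κ := power_le_mu hκ t.2.2
    _ = #T * (2 ^< κ) := sum_const' _ _
    _ ≤ 2 ^< κ := mu_mul_mu hκ (mk_small_subsets hκ hE) le_rfl


/-- restriction of `p` to `E` (top outside `E`). -/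
noncomputable def res (E : Set X) (p : PseudoProd κ P) : PseudoProd κ P := by
  classical
  exact ⟨fun i => if i ∈ E then p.1 i else ⊤, by
    refine lt_of_le_of_lt (mk_le_mk_of_subset ?_) p.2
    intro i hi
    simp only [mem_setOf_eq] at hi ⊢
    by_cases hE : i ∈ E
    · simpa [hE] using hi
    · simp [hE] at hi⟩

lemma res_apply_mem {E : Set X} {p : PseudoProd κ P} {i : X} (h : i ∈ E) :
    (res E p).1 i = p.1 i := by
  simp [res, h]

lemma res_supp_subset (E : Set X) (p : PseudoProd κ P) :
    {i | (res E p).1 i ≠ ⊤} ⊆ E := by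
  intro i hi
  simp only [res, mem_setOf_eq] at hi
  by_contra hE
  simp [hE] at hi

open Classical in
/-- choice of a witness in `A` whose restriction to `E` is `x`, if one exists. -/
noncomputable def wit (A : Set (PseudoProd κ P)) (d : PseudoProd κ P) (E : Set X)
    (x : PseudoProd κ P) : PseudoProd κ P :=
  if h : ∃ p ∈ A, res E p = x then h.choose else d

lemma wit_spec {A : Set (PseudoProd κ P)} {d : PseudoProd κ P} {E : Set X}
    {x : PseudoProd κ P} (h : ∃ p ∈ A, res E p = x) :
    wit A d E x ∈ A ∧ res E (wit A d E x) = x := by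
  rw [wit]
  rw [dif_pos h]
  exact ⟨h.choose_spec.1, h.choose_spec.2⟩

/-- one closure step. -/
def step (A : Set (PseudoProd κ P)) (d : PseudoProd κ P) (E : Set X) : Set X :=
  E ∪ ⋃ (x : PseudoProd κ P) (_ : {i | x.1 i ≠ ⊤} ⊆ E), {i | (wit A d E x).1 i ≠ ⊤}

lemma subset_step (A : Set (PseudoProd κ P)) (d : PseudoProd κ P) (E : Set X) :
    E ⊆ step A d E := subset_union_left

lemma wit_supp_subset_step (A : Set (PseudoProd κ P)) (d : PseudoProd κ P) (E : Set X)
    {x : PseudoProd κ P} (hx : {i | x.1 i ≠ ⊤} ⊆ E) :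
    {i | (wit A d E x).1 i ≠ ⊤} ⊆ step A d E := by
  intro i hi
  exact subset_union_right (mem_iUnion.2 ⟨x, mem_iUnion.2 ⟨hx, hi⟩⟩)

lemma mk_step_le {A : Set (PseudoProd κ P)} {d : PseudoProd κ P} {E : Set X}
    (hκ : κ.IsRegular) (hP : ∀ i, #(P i) ≤ 2 ^< κ) (hE : #E ≤ 2 ^< κ) :
    #(step A d E) ≤ 2 ^< κ := by
  have h1 : #(⋃ (x : PseudoProd κ P) (_ : {i | x.1 i ≠ ⊤} ⊆ E),
      {i | (wit A d E x).1 i ≠ ⊤}) ≤ 2 ^< κ := by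
    have hrw : (⋃ (x : PseudoProd κ P) (_ : {i | x.1 i ≠ ⊤} ⊆ E),
        {i | (wit A d E x).1 i ≠ ⊤}) =
        ⋃ (x : {x : PseudoProd κ P // {i | x.1 i ≠ ⊤} ⊆ E}),
          {i | (wit A d E x.1).1 i ≠ ⊤} := by
      rw [iUnion_subtype]
    rw [hrw]
    calc #(⋃ (x : {x : PseudoProd κ P // {i | x.1 i ≠ ⊤} ⊆ E}),
          {i | (wit A d E x.1).1 i ≠ ⊤})
        ≤ #{x : PseudoProd κ P // {i | x.1 i ≠ ⊤} ⊆ E} *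
            ⨆ x : {x : PseudoProd κ P // {i | x.1 i ≠ ⊤} ⊆ E},
              #{i | (wit A d E x.1).1 i ≠ ⊤} := mk_iUnion_le _
      _ ≤ 2 ^< κ := by
          refine mu_mul_mu hκ (mk_supported hκ hP hE) (ciSup_le' fun x => ?_)
          exact le_trans (le_of_lt (wit A d E x.1).2)
            (kappa_le_mu hκ.aleph0_le)
  calc #(step A d E) ≤ #E + _ := mk_union_le _ _
    _ ≤ (2 ^< κ) + (2 ^< κ) := add_le_add hE h1
    _ = 2 ^< κ := add_eq_self (aleph0_le_mu hκ.aleph0_le)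

/-- the closure hierarchy. -/
noncomputable def DD (A : Set (PseudoProd κ P)) (d : PseudoProd κ P) (o : Ordinal.{u}) :
    Set X :=
  ⋃ (o' : Ordinal.{u}) (_ : o' < o), step A d (DD A d o')
termination_by o

lemma step_DD_subset {A : Set (PseudoProd κ P)} {d : PseudoProd κ P} {o o' : Ordinal.{u}}
    (h : o' < o) : step A d (DD A d o') ⊆ DD A d o := by
  conv_rhs => rw [DD]
  exact subset_iUnion_of_subset o' (subset_iUnion_of_subset h (subset_refl _))

lemma DD_subset {A : Set (PseudoProd κ P)} {d : PseudoProd κ P} {o o' : Ordinal.{u}}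
    (h : o' ≤ o) : DD A d o' ⊆ DD A d o := by
  conv_lhs => rw [DD]
  refine iUnion_subset fun o'' => iUnion_subset fun ho'' => ?_
  exact step_DD_subset (lt_of_lt_of_le ho'' h)

lemma mem_DD_iff {A : Set (PseudoProd κ P)} {d : PseudoProd κ P} {o : Ordinal.{u}} {i : X} :
    i ∈ DD A d o ↔ ∃ o' < o, i ∈ step A d (DD A d o') := by
  conv_lhs => rw [DD]
  simp only [mem_iUnion, exists_prop]

lemma mk_DD_le {A : Set (PseudoProd κ P)} {d : PseudoProd κ P}
    (hκ : κ.IsRegular) (hP : ∀ i, #(P i) ≤ 2 ^< κ) :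
    ∀ o : Ordinal.{u}, o ≤ κ.ord → #(DD A d o) ≤ 2 ^< κ := by
  intro o
  induction o using Ordinal.induction with
  | h o IH =>
    intro ho
    have hrw : DD A d o = ⋃ b : o.ToType,
        step A d (DD A d (((Ordinal.ToType.mk (o := o)).symm b : Iio o) : Ordinal)) := by
      ext i
      rw [mem_DD_iff]
      simp only [mem_iUnion]
      constructor
      · rintro ⟨o', ho', hi⟩
        refine ⟨(Ordinal.ToType.mk (o := o)) ⟨o', ho'⟩, ?_⟩
        simpa only [OrderIso.symm_apply_apply] using hi
      · rintro ⟨b, hi⟩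
        exact ⟨_, ((Ordinal.ToType.mk (o := o)).symm b).2, hi⟩
    rw [hrw]
    calc #(⋃ b : o.ToType,
          step A d (DD A d (((Ordinal.ToType.mk (o := o)).symm b : Iio o) : Ordinal)))
        ≤ #o.ToType * ⨆ b : o.ToType,
            #(step A d (DD A d (((Ordinal.ToType.mk (o := o)).symm b : Iio o) : Ordinal))) :=
          mk_iUnion_le _
      _ ≤ 2 ^< κ := by
          refine mu_mul_mu hκ ?_ (ciSup_le' fun b => ?_)
          · rw [mk_toType]
            exact le_trans (le_trans (Ordinal.card_le_card ho) (le_of_eq (card_ord κ)))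
              (kappa_le_mu hκ.aleph0_le)
          · have hb := ((Ordinal.ToType.mk (o := o)).symm b).2
            rw [mem_Iio] at hb
            exact mk_step_le hκ hP (IH _ hb (le_trans (le_of_lt hb) ho))

end PseudoProdCC

open PseudoProdCC in
theorem pseudoProd_cc (hκ : κ.IsRegular) (hP : ∀ i, #(P i) ≤ 2 ^< κ)
    (A : Set (PseudoProd κ P))
    (hA : ∀ p ∈ A, ∀ q ∈ A, p ≠ q → PseudoProd.Incompat p q) :
    #A ≤ 2 ^< κ := by
  classical
  rcases A.eq_empty_or_nonempty with rfl | ⟨d, hd⟩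
  · rw [mk_emptyCollection]
    exact zero_le
  set D := DD A d κ.ord with hDdef
  have hDcard : #D ≤ 2 ^< κ := mk_DD_le hκ hP κ.ord le_rfl
  have hsupp : ∀ p ∈ A, {i | p.1 i ≠ ⊤} ⊆ D := by
    intro p hp
    have hex : ∀ i : ({i | p.1 i ≠ ⊤} ∩ D : Set X),
        ∃ o, o < κ.ord ∧ (i : X) ∈ step A d (DD A d o) := by
      intro i
      have h2 : (i : X) ∈ DD A d κ.ord := i.2.2
      rw [mem_DD_iff] at h2
      obtain ⟨o', ho', hio⟩ := h2
      exact ⟨o', ho', hio⟩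
    choose of hof1 hof2 using hex
    set O := ⨆ i, Order.succ (of i) with hOdef
    have hOlt : O < κ.ord := by
      refine Ordinal.iSup_lt_ord ?_ fun i => ?_
      · rw [hκ.cof_eq]
        exact lt_of_le_of_lt (mk_le_mk_of_subset inter_subset_left) p.2
      · exact (isSuccLimit_ord hκ.aleph0_le).succ_lt (hof1 i)
    have hsO : ({i | p.1 i ≠ ⊤} ∩ D : Set X) ⊆ DD A d O := by
      intro i hi
      have h3 : step A d (DD A d (of ⟨i, hi⟩)) ⊆ DD A d O :=
        step_DD_subset (lt_of_lt_of_le (Order.lt_succ _) (Ordinal.le_iSup (fun j => Order.succ (of j)) ⟨i, hi⟩))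
      exact h3 (hof2 ⟨i, hi⟩)
    set x := res (DD A d O) p with hxdef
    have hwit : wit A d (DD A d O) x ∈ A ∧ res (DD A d O) (wit A d (DD A d O) x) = x :=
      wit_spec (A := A) (d := d) (E := DD A d O) (x := x) ⟨p, hp, hxdef.symm⟩
    set q := wit A d (DD A d O) x with hqdef
    have hsuppq : {i | q.1 i ≠ ⊤} ⊆ step A d (DD A d O) :=
      wit_supp_subset_step A d _ (res_supp_subset _ p)
    have hstepD : step A d (DD A d O) ⊆ D := step_DD_subset hOlt
    have hagree : ∀ i, p.1 i ≠ ⊤ → q.1 i ≠ ⊤ → p.1 i = q.1 i := by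
      intro i hpi hqi
      have hiD : i ∈ D := hstepD (hsuppq hqi)
      have hiO : i ∈ DD A d O := hsO ⟨hpi, hiD⟩
      calc p.1 i = x.1 i := (res_apply_mem hiO).symm
        _ = (res (DD A d O) q).1 i := by rw [hwit.2]
        _ = q.1 i := res_apply_mem hiO
    set rfun : ∀ i, P i := fun i => if p.1 i = ⊤ then q.1 i else p.1 i with hrfun
    have hrsupp : #{i | rfun i ≠ ⊤} < κ := by
      refine lt_of_le_of_lt
        (mk_le_mk_of_subset (?_ : _ ⊆ {i | p.1 i ≠ ⊤} ∪ {i | q.1 i ≠ ⊤}))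
        (lt_of_le_of_lt (mk_union_le _ _) (add_lt_of_lt hκ.aleph0_le p.2 q.2))
      intro i hi
      have hi' : rfun i ≠ ⊤ := hi
      simp only [mem_setOf_eq, mem_union]
      by_cases h : p.1 i = ⊤
      · right
        have heq : rfun i = q.1 i := by rw [hrfun]; simp [h]
        rw [heq] at hi'
        exact hi'
      · left; exact h
    set r : PseudoProd κ P := ⟨rfun, hrsupp⟩ with hrdef
    have hrp : r.ple p := by
      constructor
      · intro i
        show rfun i ≤ p.1 i
        rw [hrfun]
        by_cases h : p.1 i = ⊤
        · simp [h]
        · simp [h]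
      · have : {i | r.1 i < p.1 i ∧ p.1 i < ⊤} = ∅ := by
          refine eq_empty_iff_forall_notMem.2 fun i hi => ?_
          obtain ⟨h1, h2⟩ := hi
          have hr : r.1 i = p.1 i := by
            show rfun i = p.1 i
            rw [hrfun]; simp [h2.ne]
          rw [hr] at h1
          exact lt_irrefl _ h1
        rw [this]
        exact finite_empty
    have hrq : r.ple q := by
      constructor
      · intro i
        show rfun i ≤ q.1 i
        rw [hrfun]
        by_cases h : p.1 i = ⊤
        · simp [h]
        · simp only [if_neg h]
          by_cases hqi : q.1 i = ⊤
          · rw [hqi]; exact le_top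
          · exact le_of_eq (hagree i h hqi)
      · have : {i | r.1 i < q.1 i ∧ q.1 i < ⊤} = ∅ := by
          refine eq_empty_iff_forall_notMem.2 fun i hi => ?_
          obtain ⟨h1, h2⟩ := hi
          have hr : r.1 i = q.1 i := by
            show rfun i = q.1 i
            rw [hrfun]
            by_cases h : p.1 i = ⊤
            · simp [h]
            · simp only [if_neg h]
              exact hagree i h h2.ne
          rw [hr] at h1
          exact lt_irrefl _ h1
        rw [this]
        exact finite_empty
    have hpq : p = q := by
      by_contra hne
      exact (hA p hp q hwit.1 hne) ⟨r, hrp, hrq⟩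
    rw [hpq]
    exact fun i hi => hstepD (hsuppq hi)
  have hinj : Function.Injective (fun a : A =>
      (⟨a.1, hsupp a.1 a.2⟩ : {p : PseudoProd κ P // {i | p.1 i ≠ ⊤} ⊆ D})) := by
    intro a b h
    dsimp only at h
    exact Subtype.ext (Subtype.mk_eq_mk.mp h)
  exact le_trans (mk_le_of_injective hinj) (mk_supported hκ hP hDcard)
end

section
/- Let κ be a cardinal and (C_β)_{β<κ} a family of uncountable subsets of ω₁ such that |C_β ∩ C_γ| ≤ ℵ₀ for all β < γ < κ. Let P be the set of pairs (D,f) where D is a finite subset of κ, f is a function with domain D, and f(δ) ∈ Fn(C_δ,2) for every δ ∈ D, ordered by: (D',f') ≤ (D,f) iff D ⊆ D', f(δ) ⊆ f'(δ) for all δ ∈ D, and the sets (f'(δ))^{-1}[{1}] \ (f(δ))^{-1}[{1}], for δ ∈ D, are pairwise disjoint. Then P has property K. -/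
open Cardinal Set

/-- The canonical type of cardinality `ℵ₁` (representing `ω₁`). -/
noncomputable abbrev Omega1Type : Type := (aleph 1).ord.ToType

variable {I : Type} (C : I → Set Omega1Type)

/-- Conditions: pairs `(D, f)` with `D` a finite subset of the index set and
`f(δ) ∈ Fn(C δ, 2)` for `δ ∈ D` (and `f` trivial outside `D`). -/
def PCond : Type :=
  {p : Finset I × ((δ : I) → Fn (C δ)) // ∀ δ, δ ∉ p.1 → p.2 δ = ⊤}

/-- The ordering on `PCond`: `(D', f') ≤ (D, f)` iff `D ⊆ D'`, `f(δ) ⊆ f'(δ)` for all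
`δ ∈ D`, and the sets `f'(δ)⁻¹[{1}] \ f(δ)⁻¹[{1}]`, for `δ ∈ D`, are pairwise disjoint. -/
def PCond.le (p' p : PCond C) : Prop :=
  p.1.1 ⊆ p'.1.1 ∧ (∀ δ ∈ p.1.1, p'.1.2 δ ≤ p.1.2 δ) ∧
    ∀ δ ∈ p.1.1, ∀ γ ∈ p.1.1, δ ≠ γ →
      Disjoint
        (Subtype.val '' {a | (p'.1.2 δ).1 a = some true ∧ ¬(p.1.2 δ).1 a = some true})
        (Subtype.val '' {a | (p'.1.2 γ).1 a = some true ∧ ¬(p.1.2 γ).1 a = some true})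

/-!
Thin the uncountable family three times: first so that the domains form a Δ-system with root `R`,
then so that the supports of the coordinates in `R` form a Δ-system with root `U`, and finally so
that all conditions have the same trace on `R × W`, where `W` is `U` together with the points
shared by two distinct `C δ`, `δ ∈ R`. By almost disjointness `W` is countable, so these traces are
finite subsets of a countable set. Two remaining conditions then agree wherever both are defined,
and their union extends both: a `1` that the union adds to `p` at `δ` comes from `q`, so `δ ∈ R`
and the point lies outside `W`, hence in no other `C γ` with `γ ∈ R`. This keeps the sets of new
`1`s pairwise disjoint.
-/

lemma exists_not_countable_fiber {α β : Type*} {A : Set α} (hA : ¬A.Countable) (f : α → β)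
    (hf : (f '' A).Countable) : ∃ b, ¬{p ∈ A | f p = b}.Countable := by
  by_contra! h
  refine hA ((hf.biUnion fun b _ => h b).mono fun p hp => ?_)
  exact mem_biUnion (mem_image_of_mem f hp) (show p ∈ {q ∈ A | f q = f p} from ⟨hp, rfl⟩)

lemma exists_pairwiseDisjoint_not_countable {α X : Type*} {A : Set α} (hA : ¬A.Countable)
    (D : α → Finset X) (hD : ∀ x, {p ∈ A | x ∈ D p}.Countable) :
    ∃ T ⊆ A, ¬T.Countable ∧ T.PairwiseDisjoint D := by
  obtain ⟨T, ⟨hTA, hTD⟩, hTmax⟩ := zorn_subset {T | T ⊆ A ∧ T.PairwiseDisjoint D}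
    fun c hc hchain => ⟨⋃₀ c, ⟨sUnion_subset fun s hs => (hc hs).1,
      (hchain.pairwiseDisjoint_sUnion D).2 fun s hs => (hc hs).2⟩,
      fun s hs => subset_sUnion_of_mem hs⟩
  refine ⟨T, hTA, fun hT => hA ?_, hTD⟩
  have hcover : A ⊆ T ∪ ⋃ p ∈ T, ⋃ x ∈ (D p : Set X), {q ∈ A | x ∈ D q} := by
    intro q hq
    by_contra hcov
    simp only [mem_union, mem_iUnion, Finset.mem_coe, mem_ofPred_eq, not_or, not_exists,
      not_and] at hcov
    have hins : insert q T ∈ {T | T ⊆ A ∧ T.PairwiseDisjoint D} :=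
      ⟨insert_subset hq hTA, hTD.insert fun p hp _ =>
        Finset.disjoint_left.2 fun x hxq hxp => hcov.2 p hp x hxp hq hxq⟩
    exact hcov.1 (hTmax hins (subset_insert q T) (mem_insert q T))
  exact (hT.union <| hT.biUnion fun p _ =>
    (D p).countable_toSet.biUnion fun x _ => hD x).mono hcover

lemma exists_deltaSystem_of_card {α X : Type*} [DecidableEq X] (n : ℕ) (A : Set α)
    (D : α → Finset X) (hA : ¬A.Countable) (hcard : ∀ p ∈ A, (D p).card = n) :
    ∃ A' ⊆ A, ¬A'.Countable ∧ ∃ R, A'.Pairwise fun p q => D p ∩ D q = R := by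
  induction n generalizing A D with
  | zero =>
    refine ⟨A, Subset.rfl, hA, ∅, fun p hp q _ _ => ?_⟩
    change D p ∩ D q = ∅
    rw [Finset.card_eq_zero.1 (hcard p hp), Finset.empty_inter]
  | succ n ih =>
    by_cases h : ∃ x, ¬{p ∈ A | x ∈ D p}.Countable
    · obtain ⟨x, hx⟩ := h
      obtain ⟨A', hA'A, hA', R, hR⟩ := ih {p ∈ A | x ∈ D p} (fun p => (D p).erase x) hx
        fun p hp => by rw [Finset.card_erase_of_mem hp.2, hcard p hp.1, Nat.add_sub_cancel]
      refine ⟨A', hA'A.trans (sep_subset _ _), hA', insert x R, fun p hp q hq hpq => ?_⟩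
      rw [← hR hp hq hpq]
      have hxp := (hA'A hp).2
      have hxq := (hA'A hq).2
      ext y
      by_cases hy : y = x <;> simp [hy, hxp, hxq]
    · push Not at h
      obtain ⟨T, hTA, hT, hTD⟩ := exists_pairwiseDisjoint_not_countable hA D h
      exact ⟨T, hTA, hT, ∅, hTD.imp fun _ _ => Finset.disjoint_iff_inter_eq_empty.1⟩

lemma exists_deltaSystem {α X : Type*} [DecidableEq X] {A : Set α} (hA : ¬A.Countable)
    (D : α → Finset X) :
    ∃ A' ⊆ A, ¬A'.Countable ∧ ∃ R, A'.Pairwise fun p q => D p ∩ D q = R := by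
  obtain ⟨n, hn⟩ := exists_not_countable_fiber hA (fun p => (D p).card) (to_countable _)
  obtain ⟨A', hA'A, hA', R, hR⟩ := exists_deltaSystem_of_card n _ D hn fun p hp => hp.2
  exact ⟨A', hA'A.trans (sep_subset _ _), hA', R, hR⟩

namespace Fn

variable {A : Type*}

noncomputable def support (x : Fn A) : Finset A := x.2.toFinset

lemma mem_support {x : Fn A} {a : A} : a ∈ x.support ↔ x.1 a ≠ none :=
  Set.Finite.mem_toFinset _

def union (x y : Fn A) : Fn A :=
  ⟨fun a => (x.1 a).or (y.1 a), (x.2.union y.2).subset fun a ha => by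
    simpa only [mem_union, mem_ofPred_eq, ne_eq, Option.or_eq_none_iff, not_and_or] using ha⟩

lemma union_apply (x y : Fn A) (a : A) : (x.union y).1 a = (x.1 a).or (y.1 a) := rfl

lemma union_le_left (x y : Fn A) : x.union y ≤ x :=
  fun _ ha => Option.or_of_isSome (Option.isSome_iff_ne_none.2 ha)

lemma top_union (y : Fn A) : (⊤ : Fn A).union y = y := rfl

lemma union_comm {x y : Fn A} (h : ∀ a, x.1 a ≠ none → y.1 a ≠ none → x.1 a = y.1 a) :
    x.union y = y.union x := by
  refine Subtype.ext (funext fun a => ?_)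
  simp only [union_apply]
  by_cases hx : x.1 a = none
  · by_cases hy : y.1 a = none <;> simp [hx, hy]
  · by_cases hy : y.1 a = none
    · simp [hy, Option.or_eq_left_of_none]
    · rw [h a hx hy]

end Fn

namespace PCond

variable {C}

lemma mem_of_apply_ne_none (p : PCond C) {δ : I} {a : C δ} (h : (p.1.2 δ).1 a ≠ none) :
    δ ∈ p.1.1 :=
  by_contra fun hδ => h (by rw [p.2 δ hδ]; rfl)

lemma le_refl (p : PCond C) : p.le C p :=
  ⟨subset_rfl, fun _ _ => _root_.le_refl _, fun _ _ _ _ _ =>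
    Set.disjoint_left.2 fun _ ⟨_, ⟨h₁, h₂⟩, _⟩ => (h₂ h₁).elim⟩

section Union

variable [DecidableEq I]

def union (p q : PCond C) : PCond C :=
  ⟨(p.1.1 ∪ q.1.1, fun δ => (p.1.2 δ).union (q.1.2 δ)), fun δ hδ => by
    rw [Finset.mem_union, not_or] at hδ
    change (p.1.2 δ).union (q.1.2 δ) = ⊤
    rw [p.2 δ hδ.1, q.2 δ hδ.2, Fn.top_union]⟩

lemma union_comm {p q : PCond C}
    (h : ∀ δ (a : C δ), (p.1.2 δ).1 a ≠ none → (q.1.2 δ).1 a ≠ none →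
      (p.1.2 δ).1 a = (q.1.2 δ).1 a) :
    p.union q = q.union p :=
  Subtype.ext (Prod.ext (Finset.union_comm _ _) (funext fun δ => Fn.union_comm (h δ)))

lemma union_le_left {p q : PCond C} {W : Set Omega1Type}
    (hagree : ∀ δ ∈ p.1.1 ∩ q.1.1, ∀ a : C δ, a.1 ∈ W → (p.1.2 δ).1 a = (q.1.2 δ).1 a)
    (hsep : ∀ δ ∈ p.1.1 ∩ q.1.1, ∀ γ ∈ p.1.1 ∩ q.1.1, δ ≠ γ → C δ ∩ C γ ⊆ W) :
    (p.union q).le C p := by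
  have hnew : ∀ δ ∈ p.1.1, ∀ a : C δ, ((p.union q).1.2 δ).1 a = some true →
      ¬(p.1.2 δ).1 a = some true → δ ∈ p.1.1 ∩ q.1.1 ∧ a.1 ∉ W := by
    intro δ hδ a h₁ h₂
    obtain ⟨hp, hq⟩ : (p.1.2 δ).1 a = none ∧ (q.1.2 δ).1 a = some true := by
      simpa only [union, Fn.union_apply, Option.or_eq_some_iff, h₂, false_or] using h₁
    have hδR : δ ∈ p.1.1 ∩ q.1.1 :=
      Finset.mem_inter.2 ⟨hδ, q.mem_of_apply_ne_none (a := a) (by simp [hq])⟩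
    refine ⟨hδR, fun haW => ?_⟩
    rw [hagree δ hδR a haW, hq] at hp
    exact Option.some_ne_none _ hp
  refine ⟨Finset.subset_union_left, fun δ _ => Fn.union_le_left _ _, fun δ hδ γ hγ hδγ => ?_⟩
  rw [Set.disjoint_left]
  rintro _ ⟨a, ⟨ha₁, ha₂⟩, rfl⟩ ⟨b, ⟨hb₁, hb₂⟩, hba⟩
  obtain ⟨hδR, haW⟩ := hnew δ hδ a ha₁ ha₂
  obtain ⟨hγR, -⟩ := hnew γ hγ b hb₁ hb₂
  exact haW (hsep δ hδR γ hγR hδγ ⟨a.2, hba ▸ b.2⟩)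

theorem exists_le_le_of_agree {p q : PCond C} {W : Set Omega1Type}
    (hagree : ∀ δ ∈ p.1.1 ∩ q.1.1, ∀ a : C δ, a.1 ∈ W → (p.1.2 δ).1 a = (q.1.2 δ).1 a)
    (hdom : ∀ δ ∈ p.1.1 ∩ q.1.1, ∀ a : C δ, (p.1.2 δ).1 a ≠ none → (q.1.2 δ).1 a ≠ none →
      a.1 ∈ W)
    (hsep : ∀ δ ∈ p.1.1 ∩ q.1.1, ∀ γ ∈ p.1.1 ∩ q.1.1, δ ≠ γ → C δ ∩ C γ ⊆ W) :
    ∃ r : PCond C, r.le C p ∧ r.le C q := by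
  have hcompat : ∀ δ (a : C δ), (p.1.2 δ).1 a ≠ none → (q.1.2 δ).1 a ≠ none →
      (p.1.2 δ).1 a = (q.1.2 δ).1 a := fun δ a hp hq =>
    have hδR := Finset.mem_inter.2 ⟨p.mem_of_apply_ne_none hp, q.mem_of_apply_ne_none hq⟩
    hagree δ hδR a (hdom δ hδR a hp hq)
  refine ⟨p.union q, union_le_left hagree hsep, ?_⟩
  rw [union_comm hcompat]
  rw [Finset.inter_comm] at hagree hsep
  exact union_le_left (fun δ hδ a ha => (hagree δ hδ a ha).symm) hsep

end Union

noncomputable def supportOn (R : Finset I) (p : PCond C) : Finset Omega1Type :=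
  R.biUnion fun δ => (p.1.2 δ).support.image Subtype.val

lemma val_mem_supportOn {R : Finset I} (p : PCond C) {δ : I} (hδ : δ ∈ R) {a : C δ}
    (ha : (p.1.2 δ).1 a ≠ none) : a.1 ∈ p.supportOn R :=
  Finset.mem_biUnion.2 ⟨δ, hδ, Finset.mem_image_of_mem _ (Fn.mem_support.2 ha)⟩

def traceOn (R : Finset I) (W : Set Omega1Type) (p : PCond C) : Set (I × Omega1Type × Bool) :=
  {t | t.1 ∈ R ∧ t.2.1 ∈ W ∧ ∃ h : t.2.1 ∈ C t.1, (p.1.2 t.1).1 ⟨t.2.1, h⟩ = some t.2.2}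

lemma traceOn_finite (R : Finset I) (W : Set Omega1Type) (p : PCond C) :
    (p.traceOn R W).Finite := by
  refine (R.finite_toSet.prod ((p.supportOn R).finite_toSet.prod finite_univ)).subset ?_
  rintro ⟨δ, x, b⟩ ⟨hδ, -, hx, hb⟩
  exact ⟨hδ, p.val_mem_supportOn hδ (a := ⟨x, hx⟩) (by simp [hb]), trivial⟩

lemma countable_image_traceOn (R : Finset I) {W : Set Omega1Type} (hW : W.Countable)
    (S : Set (PCond C)) : (traceOn R W '' S).Countable :=
  (countable_ofPred_finite_subset (R.countable_toSet.prod (hW.prod countable_univ))).mono <| by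
    rintro _ ⟨p, -, rfl⟩
    exact ⟨p.traceOn_finite R W, fun t ht => ⟨ht.1, ht.2.1, trivial⟩⟩

lemma apply_eq_of_traceOn_eq {R : Finset I} {W : Set Omega1Type} {p q : PCond C}
    (h : p.traceOn R W = q.traceOn R W) {δ : I} (hδ : δ ∈ R) (a : C δ) (ha : a.1 ∈ W) :
    (p.1.2 δ).1 a = (q.1.2 δ).1 a := by
  have key : ∀ (r : PCond C) b, (δ, a.1, b) ∈ r.traceOn R W ↔ (r.1.2 δ).1 a = some b :=
    fun r b => by simp [traceOn, hδ, ha]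
  ext b
  rw [← key p, ← key q, h]

end PCond

theorem pcond_property_K_general (I : Type)
    (C : I → Set Omega1Type)
    (hCC : ∀ β γ, β ≠ γ → (C β ∩ C γ).Countable) :
    ∀ S : Set (PCond C), ¬S.Countable →
      ∃ T ⊆ S, ¬T.Countable ∧
        ∀ p ∈ T, ∀ q ∈ T, ∃ r : PCond C, r.le C p ∧ r.le C q := by
  classical
  intro S hS
  obtain ⟨S₁, hS₁S, hS₁, R, hR⟩ := exists_deltaSystem hS fun p : PCond C => p.1.1
  obtain ⟨S₂, hS₂S₁, hS₂, U, hU⟩ := exists_deltaSystem hS₁ (PCond.supportOn R)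
  set W : Set Omega1Type := U ∪ ⋃ δ ∈ (R : Set I), ⋃ γ ∈ (R : Set I) \ {δ}, C δ ∩ C γ
  have hW : W.Countable := U.countable_toSet.union <| R.countable_toSet.biUnion fun δ _ =>
    (R.countable_toSet.mono sdiff_subset).biUnion fun γ hγ => hCC δ γ fun h => hγ.2 h.symm
  obtain ⟨τ, hτ⟩ := exists_not_countable_fiber hS₂ _ (PCond.countable_image_traceOn R hW S₂)
  refine ⟨{p ∈ S₂ | p.traceOn R W = τ}, fun p hp => hS₁S (hS₂S₁ hp.1), hτ, ?_⟩
  rintro p ⟨hpS, hpτ⟩ q ⟨hqS, hqτ⟩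
  obtain rfl | hpq := eq_or_ne p q
  · exact ⟨p, p.le_refl, p.le_refl⟩
  refine PCond.exists_le_le_of_agree (W := W) ?_ ?_ ?_ <;>
    rw [hR (hS₂S₁ hpS) (hS₂S₁ hqS) hpq]
  · exact fun δ hδ => PCond.apply_eq_of_traceOn_eq (hpτ.trans hqτ.symm) hδ
  · intro δ hδ a hpa hqa
    refine Or.inl ?_
    rw [Finset.mem_coe, ← hU hpS hqS hpq]
    exact Finset.mem_inter.2 ⟨p.val_mem_supportOn hδ hpa, q.val_mem_supportOn hδ hqa⟩
  · exact fun δ hδ γ hγ hδγ x hx =>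
      Or.inr (mem_biUnion hδ (mem_biUnion ⟨hγ, fun h => hδγ (eq_of_mem_singleton h).symm⟩ hx))

theorem pcond_property_K (κ : Cardinal) (I : Type) (hI : #I = κ)
    (C : I → Set Omega1Type)
    (hC : ∀ β, ¬(C β).Countable)
    (hCC : ∀ β γ, β ≠ γ → (C β ∩ C γ).Countable) :
    ∀ S : Set (PCond C), ¬S.Countable →
      ∃ T ⊆ S, ¬T.Countable ∧
        ∀ p ∈ T, ∀ q ∈ T, ∃ r : PCond C, r.le C p ∧ r.le C q :=
  pcond_property_K_general I C hCC
end
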